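/- arXiv:2307.10671 — 8 statements merged into one kernel-verified Lean document; each statement's English description precedes it below -/
import Mathlib

section
/- Let X be a vector space over ℝ, let α be an infinite cardinal, and let M ⊆ X. If M is pointwise α-lineable, then M is infinitely pointwise α-lineable; that is, for every x ∈ M there exists a countable family (W_k)_{k∈ℕ} of linear subspaces of X such that for every k ∈ ℕ: dim(W_k) = α, x ∈ W_k ⊆ M ∪ {0}, and W_k ∩ W_l = span{x} for every l ∈ ℕ with l ≠ k. -/
/-!
Extend `{x} \ {0}` to a basis `b` of the given `α`-dimensional subspace `W ∋ x`. As `α` is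
infinite, the rest of `b` splits into countably many disjoint pieces `R k` of cardinality `α`.
The subspaces `span ({x} ∪ R k)` lie in `W`, have dimension `α`, and any two of them meet exactly
in `span {x}`, since spans of subsets of a linearly independent set intersect in the span of the
intersection.
-/

universe u

open Cardinal Set Submodule Function

theorem LinearIndepOn.span_inf_span {R M : Type*} [Semiring R] [AddCommMonoid M] [Module R M]
    {b A B : Set M} (hb : LinearIndepOn R id b) (hA : A ⊆ b) (hB : B ⊆ b) :
    span R A ⊓ span R B = span R (A ∩ B) := by
  -- `linearCombination` is injective on `b →₀ R` and maps `supported` submodules onto spans.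
  have hv : LinearIndependent R (Subtype.val : b → M) := hb
  have key := congrArg (Submodule.map (Finsupp.linearCombination R Subtype.val))
    (Finsupp.supported_inter (M := R) (R := R) (Subtype.val ⁻¹' A : Set b) (Subtype.val ⁻¹' B))
  rw [map_inf _ hv] at key
  simpa only [← Finsupp.span_image_eq_map_linearCombination, ← preimage_inter,
    image_preimage_eq_of_subset, Subtype.range_coe, hA, hB, inter_subset_left.trans hA]
    using key.symm

theorem Cardinal.mk_sdiff_eq_of_mk_lt {β : Type*} {s t : Set β} (ht : ℵ₀ ≤ #t) (hs : #s < #t) :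
    #(t \ s : Set β) = #t := by
  refine le_antisymm (mk_le_mk_of_subset sdiff_subset) (not_lt.mp fun hlt => ?_)
  exact (le_mk_sdiff_add_mk t s).not_gt (add_lt_of_lt ht hlt hs)

theorem Set.exists_pairwise_disjoint_nat_subsets {β : Type*} {t : Set β} (ht : ℵ₀ ≤ #t) :
    ∃ R : ℕ → Set β, Pairwise (Disjoint on R) ∧ ∀ k, R k ⊆ t ∧ #(R k) = #t := by
  obtain ⟨e⟩ : Nonempty (ℕ × t ≃ t) := Cardinal.eq.mp <| by
    rw [mk_prod, mk_nat, lift_aleph0, lift_uzero, aleph0_mul_eq ht]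
  have he : ∀ k, Injective fun d : t => (e (k, d) : β) := fun k d d' h =>
    (Prod.ext_iff.mp (e.injective (Subtype.ext h))).2
  refine ⟨fun k => range fun d : t => (e (k, d) : β), fun k l hkl => ?_,
    fun k => ⟨?_, mk_range_eq _ (he k)⟩⟩
  · refine disjoint_left.mpr ?_
    rintro _ ⟨d, rfl⟩ ⟨d', hd'⟩
    exact hkl (Prod.ext_iff.mp (e.injective (Subtype.ext hd'))).1.symm
  · rintro _ ⟨d, rfl⟩
    exact (e (k, d)).2

theorem Submodule.exists_nat_family_pairwise_inf_eq_span {K X : Type*} [DivisionRing K]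
    [AddCommGroup X] [Module K X] {W : Submodule K X} (hW : ℵ₀ ≤ Module.rank K W) {s : Set X}
    (hs : LinearIndepOn K id s) (hsW : s ⊆ W) (hs_lt : #s < Module.rank K W) :
    ∃ V : ℕ → Submodule K X,
      (∀ k, Module.rank K (V k) = Module.rank K W ∧ span K s ≤ V k ∧ V k ≤ W) ∧
      Pairwise fun k l => V k ⊓ V l = span K s := by
  obtain ⟨b, hbW, hsb, hWb, hb⟩ := exists_linearIndepOn_id_extension hs hsW
  have hb_rank : #b = Module.rank K W := by
    rw [← rank_span_set hb, le_antisymm (span_le.mpr hbW) fun _ hx => hWb hx]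
  rw [← hb_rank] at hW hs_lt ⊢
  have hdiff := mk_sdiff_eq_of_mk_lt hW hs_lt
  obtain ⟨R, hR_disj, hR⟩ := exists_pairwise_disjoint_nat_subsets (hdiff ▸ hW)
  have hsub : ∀ k, s ∪ R k ⊆ b := fun k => union_subset hsb ((hR k).1.trans sdiff_subset)
  refine ⟨fun k => span K (s ∪ R k), fun k => ⟨?_, span_mono subset_union_left,
    span_le.mpr ((hsub k).trans hbW)⟩, fun k l hkl => ?_⟩
  · rw [rank_span_set (hb.mono (hsub k))]
    refine le_antisymm (mk_le_mk_of_subset (hsub k)) ?_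
    rw [← hdiff, ← (hR k).2]
    exact mk_le_mk_of_subset subset_union_right
  · dsimp only
    rw [hb.span_inf_span (hsub k) (hsub l), ← union_inter_distrib_left, (hR_disj hkl).inter_eq,
      union_empty]

/-- If `M` is pointwise `α`-lineable (α infinite), then `M` is
infinitely pointwise `α`-lineable. -/
theorem pointwise_lineable_iff_infinitely_pointwise_lineable
    {X : Type u} [AddCommGroup X] [Module ℝ X] (α : Cardinal.{u})
    (hα : Cardinal.aleph0 ≤ α) (M : Set X)
    (hM : ∀ x ∈ M, ∃ W : Submodule ℝ X,
      Module.rank ℝ W = α ∧ x ∈ W ∧ (W : Set X) ⊆ M ∪ {0}) :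
    ∀ x ∈ M, ∃ W : ℕ → Submodule ℝ X, ∀ k : ℕ,
      Module.rank ℝ (W k) = α ∧
      x ∈ W k ∧ (W k : Set X) ⊆ M ∪ {0} ∧
      ∀ l : ℕ, l ≠ k → W k ⊓ W l = Submodule.span ℝ {x} := by
  intro x hx
  obtain ⟨W, hWα, hxW, hWM⟩ := hM x hx
  have hs : LinearIndepOn ℝ id ({x} \ {0} : Set X) := by
    by_cases hx0 : x = 0
    · simp [hx0]
    · rw [sdiff_singleton_eq_self (s := {x}) (Ne.symm hx0)]
      exact (linearIndepOn_singleton_iff (R := ℝ) (v := id)).mpr hx0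
  have hs_lt : #({x} \ {0} : Set X) < Module.rank ℝ W :=
    (mk_le_one_iff_set_subsingleton.mpr (subsingleton_singleton.anti sdiff_subset)).trans_lt
      (one_lt_aleph0.trans_le (hWα ▸ hα))
  obtain ⟨V, hV, hV_inf⟩ := W.exists_nat_family_pairwise_inf_eq_span (hWα ▸ hα) hs
    (Set.sdiff_subset.trans (singleton_subset_iff.mpr hxW)) hs_lt
  rw [span_sdiff_singleton_zero] at hV hV_inf
  exact ⟨V, fun k => ⟨(hV k).1.trans hWα, (hV k).2.1 (mem_span_singleton_self x),
    fun y hy => hWM ((hV k).2.2 hy), fun l hl => hV_inf hl.symm⟩⟩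
end

section
/- Let X be a vector space over ℝ, let α be an infinite cardinal, and let M ⊆ X be pointwise α-lineable. Then for every x ∈ M there exists a countable family (W_k)_{k∈ℕ} of linear subspaces of X such that for every k ∈ ℕ: dim(W_k) = α, x ∈ W_k ⊆ M ∪ {0}, W_k ∩ W_l = span{x} for every l ≠ k, and additionally W_k + W_l ⊆ M ∪ {0} for all k, l ∈ ℕ. -/
/-!
Extend `{x} \ {0}` to a basis `b` of a witness `W` for `x`, so `#b = α`. Since `α` is infinite,
`b` splits into countably many subsets `A k` of cardinality `α` that pairwise meet exactly in
`{x} \ {0}`. By linear independence of `b`, the spans `span (A k)` then pairwise meet in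
`span {x}`, and all of them, together with their sums, lie in `W ⊆ M ∪ {0}`.
-/

open Pointwise

universe u

open Function Set Submodule Cardinal

theorem LinearIndependent.span_image_inter {ι R M : Type*} [Semiring R] [AddCommMonoid M]
    [Module R M] {v : ι → M} (hv : LinearIndependent R v) (s t : Set ι) :
    span R (v '' (s ∩ t)) = span R (v '' s) ⊓ span R (v '' t) := by
  simp only [Finsupp.span_image_eq_map_linearCombination, Finsupp.supported_inter,
    Submodule.map_inf _ hv.finsuppLinearCombination_injective]

theorem LinearIndepOn.span_inter_of_subset {R M : Type*} [Semiring R] [AddCommMonoid M]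
    [Module R M] {b s t : Set M} (hb : LinearIndepOn R id b) (hs : s ⊆ b) (ht : t ⊆ b) :
    span R (s ∩ t) = span R s ⊓ span R t := by
  have key := hb.linearIndependent.span_image_inter (Subtype.val ⁻¹' s) (Subtype.val ⁻¹' t)
  simp only [id_eq, ← preimage_inter, Subtype.image_preimage_coe] at key
  rwa [inter_eq_right.2 hs, inter_eq_right.2 ht, inter_eq_right.2 (inter_subset_left.trans hs)]
    at key

theorem Cardinal.exists_pairwise_disjoint_subsets_mk_eq {ι : Type u} (t : Set ι)
    (ht : ℵ₀ ≤ #t) :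
    ∃ P : ℕ → Set ι, (∀ k, P k ⊆ t ∧ #(P k) = #t) ∧ Pairwise (Disjoint on P) := by
  obtain ⟨e⟩ : Nonempty (ULift.{u} ℕ × t ≃ t) := by
    rw [← Cardinal.eq]
    simp only [mk_prod, mk_uLift, mk_nat, lift_aleph0, lift_id, aleph0_mul_eq ht]
  let f (k : ℕ) (y : t) : ι := e (ULift.up k, y)
  have hf (k : ℕ) : Function.Injective (f k) :=
    Subtype.val_injective.comp (e.injective.comp (Prod.mk_right_injective _))
  refine ⟨fun k => range (f k), fun k => ⟨?_, mk_range_eq _ (hf k)⟩, ?_⟩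
  · rintro _ ⟨y, rfl⟩
    exact (e _).2
  · intro k l hkl
    refine disjoint_range_iff.2 fun y z hyz => hkl ?_
    simpa using congrArg Prod.fst (e.injective (Subtype.val_injective hyz))

theorem Cardinal.exists_nat_family_inter_eq {ι : Type u} {s Z : Set ι} (hZs : Z ⊆ s)
    (hs : ℵ₀ ≤ #s) (hZ : #Z < #s) :
    ∃ A : ℕ → Set ι, (∀ k, Z ⊆ A k ∧ A k ⊆ s ∧ #(A k) = #s) ∧
      Pairwise fun k l => A k ∩ A l = Z := by
  have hdiff : #(s \ Z : Set ι) = #s := by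
    refine (mk_le_mk_of_subset sdiff_subset).antisymm (not_lt.1 fun hlt => ?_)
    exact (add_lt_of_lt hs hlt hZ).ne (mk_sdiff_add_mk hZs)
  obtain ⟨P, hP, hPdisj⟩ := exists_pairwise_disjoint_subsets_mk_eq (s \ Z) (hdiff ▸ hs)
  refine ⟨fun k => Z ∪ P k, fun k => ⟨subset_union_left, union_subset hZs
    ((hP k).1.trans sdiff_subset), ?_⟩, fun k l hkl => ?_⟩
  · refine (mk_le_mk_of_subset (union_subset hZs ((hP k).1.trans sdiff_subset))).antisymm ?_
    exact hdiff ▸ (hP k).2 ▸ mk_le_mk_of_subset subset_union_right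
  · change (Z ∪ P k) ∩ (Z ∪ P l) = Z
    rw [← union_inter_distrib_left, (hPdisj hkl).inter_eq, union_empty]

theorem linearIndepOn_id_singleton_sdiff_zero {K V : Type*} [DivisionRing K] [AddCommGroup V]
    [Module K V] (x : V) : LinearIndepOn K id ({x} \ {0} : Set V) := by
  by_cases hx0 : x = 0
  · simp [hx0]
  · rw [sdiff_eq_left.2 (disjoint_singleton.2 hx0)]
    exact LinearIndepOn.singleton hx0

theorem Submodule.exists_linearIndepOn_span_eq_of_mem {K V : Type*} [DivisionRing K]
    [AddCommGroup V] [Module K V] (W : Submodule K V) {x : V} (hx : x ∈ W) :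
    ∃ b : Set V, {x} \ {0} ⊆ b ∧ span K b = W ∧ LinearIndepOn K id b := by
  obtain ⟨b, hbW, hxb, hWb, hb⟩ := exists_linearIndepOn_id_extension
    (linearIndepOn_id_singleton_sdiff_zero (K := K) x)
    (sdiff_subset.trans (singleton_subset_iff.2 hx))
  exact ⟨b, hxb, le_antisymm (span_le.2 hbW) (by simpa using span_mono (R := K) hWb), hb⟩

/-- If `M` is pointwise `α`-lineable (α infinite), then for every `x ∈ M`
there is a countable family of subspaces witnessing infinite pointwise `α`-lineability,
which additionally satisfies `W k + W l ⊆ M ∪ {0}` for all `k, l`. -/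
theorem infinitely_pointwise_lineable_with_sums
    {X : Type u} [AddCommGroup X] [Module ℝ X] (α : Cardinal.{u})
    (hα : Cardinal.aleph0 ≤ α) (M : Set X)
    (hM : ∀ x ∈ M, ∃ W : Submodule ℝ X,
      Module.rank ℝ W = α ∧ x ∈ W ∧ (W : Set X) ⊆ M ∪ {0}) :
    ∀ x ∈ M, ∃ W : ℕ → Submodule ℝ X,
      (∀ k : ℕ,
        Module.rank ℝ (W k) = α ∧
        x ∈ W k ∧ (W k : Set X) ⊆ M ∪ {0} ∧
        ∀ l : ℕ, l ≠ k → W k ⊓ W l = Submodule.span ℝ {x}) ∧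
      (∀ k l : ℕ, (W k : Set X) + (W l : Set X) ⊆ M ∪ {0}) := by
  intro x hx
  obtain ⟨W, hWrank, hxW, hWM⟩ := hM x hx
  obtain ⟨b, hxb, hspan, hb⟩ := W.exists_linearIndepOn_span_eq_of_mem hxW
  have hbα : #b = α := by rw [← rank_span_set hb, hspan, hWrank]
  obtain ⟨A, hA, hAinter⟩ := exists_nat_family_inter_eq hxb (hbα ▸ hα)
    (hbα ▸ (toFinite _).lt_aleph0.trans_le hα)
  have hAW (k : ℕ) : span ℝ (A k) ≤ W := hspan ▸ span_mono (hA k).2.1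
  refine ⟨fun k => span ℝ (A k), fun k => ⟨?_, ?_, fun y hy => hWM (hAW k hy), ?_⟩, ?_⟩
  · rw [rank_span_set (hb.mono (hA k).2.1), (hA k).2.2, hbα]
  · have hxspan : x ∈ span ℝ ({x} \ {0} : Set X) := by
      rw [span_sdiff_singleton_zero]
      exact mem_span_singleton_self x
    exact span_mono (hA k).1 hxspan
  · intro l hlk
    rw [← hb.span_inter_of_subset (hA k).2.1 (hA l).2.1, hAinter hlk.symm,
      span_sdiff_singleton_zero]
  · rintro k l _ ⟨y, hy, z, hz, rfl⟩
    exact hWM (W.add_mem (hAW k hy) (hAW l hz))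
end

section
/- Let X be a metrizable separable topological vector space over ℝ, let α be an infinite cardinal, and let M be a nonempty subset of X for which there exists a nonempty subset N ⊆ X such that: (i) M + N ⊆ M (M is stronger than N); (ii) M ∩ N = ∅; (iii) there exists a linear subspace V of X with V dense in X and V ⊆ N ∪ {0} (N is dense-lineable). If M is pointwise α-lineable, then M is infinitely pointwise α-dense lineable: for every x ∈ M there exists a countable family (W_k)_{k∈ℕ} of linear subspaces of X such that for every k ∈ ℕ: W_k is dense in X, dim(W_k) = α, x ∈ W_k ⊆ M ∪ {0}, and W_k ∩ W_l = span{x} for every l ≠ k. -/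
open Pointwise

universe u

/-!
Given `x ∈ M`, take `W ⊆ M ∪ {0}` of dimension `α` through `x` and a dense subspace
`V ⊆ N ∪ {0}`; as `M ∩ N = ∅`, `W` and `V` meet only in `0`. Split a basis of `W` through `x`
into `x` and countably many blocks of size `α`, and perturb the basis vectors by vectors of `V`.
The perturbed family stays linearly independent modulo `V`, so the span of any part of it lies in
`W ⊔ V` and meets `V` trivially, hence lies in `M ∪ {0}` because `M + N ⊆ M`. Distinct blocks
(each together with `x`) then span subspaces meeting exactly in `span {x}`, and choosing the
perturbed vectors as `t • b + c`, with `c` running through a dense sequence of `V` and `t • b`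
small, makes each of them dense.
-/

open Cardinal Filter Set Submodule Topology

theorem LinearIndependent.span_image_inf_span_image {R M ι : Type*} [Semiring R]
    [AddCommMonoid M] [Module R M] {v : ι → M} (hv : LinearIndependent R v) (s t : Set ι) :
    span R (v '' s) ⊓ span R (v '' t) = span R (v '' (s ∩ t)) := by
  simp only [Finsupp.span_image_eq_map_linearCombination, Finsupp.supported_inter,
    Submodule.map_inf _ hv]

theorem LinearIndependent.disjoint_span_ker_of_comp {R M M' ι : Type*} [Semiring R]
    [AddCommMonoid M] [AddCommMonoid M'] [Module R M] [Module R M'] {v : ι → M}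
    (f : M →ₗ[R] M') (hfv : LinearIndependent R (f ∘ v)) :
    Disjoint (span R (range v)) (LinearMap.ker f) := by
  refine disjoint_def.2 fun y hy hfy => ?_
  rw [← Finsupp.range_linearCombination] at hy
  obtain ⟨l, rfl⟩ := hy
  rw [LinearMap.mem_ker, Finsupp.apply_linearCombination,
    ← map_zero (Finsupp.linearCombination R (f ∘ v))] at hfy
  rw [hfv hfy, map_zero]

theorem LinearIndependent.mkQ_comp_add_of_disjoint {R M ι : Type*} [Ring R] [AddCommGroup M]
    [Module R M] {W V : Submodule R M} (hWV : Disjoint W V) {b v : ι → M}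
    (hb : LinearIndependent R b) (hbW : ∀ i, b i ∈ W) (hvV : ∀ i, v i ∈ V) :
    LinearIndependent R (V.mkQ ∘ (b + v)) := by
  have hq : V.mkQ ∘ (b + v) = V.mkQ ∘ b :=
    funext fun i => by simp [(Submodule.Quotient.mk_eq_zero V).2 (hvV i)]
  rw [hq]
  exact hb.map (by rw [ker_mkQ]; exact hWV.mono_left (span_le.2 (range_subset_iff.2 hbW)))

theorem exists_linearIndependent_option {K : Type*} {X : Type u} [DivisionRing K] [AddCommGroup X]
    [Module K X] {W : Submodule K X} {x : X} (hxW : x ∈ W) (hx : x ≠ 0)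
    (hW : ℵ₀ ≤ Module.rank K W) {ι : Type u} (hι : #ι = Module.rank K W) :
    ∃ B : Option ι → X, LinearIndependent K B ∧ B none = x ∧ ∀ o, B o ∈ W := by
  classical
  have hli : LinearIndepOn K id {(⟨x, hxW⟩ : W)} :=
    (linearIndepOn_singleton_iff K).2 (by simpa using hx)
  have hxS : (⟨x, hxW⟩ : W) ∈ hli.extend (subset_univ _) := hli.subset_extend _ rfl
  let basis := Module.Basis.extend hli
  obtain ⟨e⟩ : Nonempty (Option ι ≃ hli.extend (subset_univ _)) :=
    Cardinal.eq.1 (by rw [mk_option, hι, add_one_eq hW, basis.mk_eq_rank''])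
  let e' := e.trans (Equiv.swap (e none) ⟨_, hxS⟩)
  refine ⟨fun o => (basis (e' o) : X),
    (basis.linearIndependent.comp e' e'.injective).map' W.subtype W.ker_subtype, ?_,
    fun o => (basis (e' o)).2⟩
  simp [e', basis, Module.Basis.extend_apply_self]

theorem Option.range_map_inter_range_map {α β γ : Type*} {f : α → γ} {g : β → γ}
    (h : Disjoint (range f) (range g)) :
    range (Option.map f) ∩ range (Option.map g) = {none} := by
  ext o
  refine ⟨?_, fun ho => ⟨⟨none, ho.symm⟩, none, ho.symm⟩⟩
  rintro ⟨⟨_ | a, rfl⟩, _ | b, hb⟩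
  · rfl
  · rfl
  · cases hb
  · exact absurd (Option.some_injective _ hb) (h.ne_of_mem ⟨a, rfl⟩ ⟨b, rfl⟩).symm

section TopologicalVectorSpace

variable {𝕜 X : Type*} [NontriviallyNormedField 𝕜] [AddCommGroup X] [Module 𝕜 X]
  [TopologicalSpace X] [ContinuousSMul 𝕜 X]

theorem exists_ne_zero_smul_mem_nhds (e : X) {U : Set X} (hU : U ∈ 𝓝 0) :
    ∃ t : 𝕜, t ≠ 0 ∧ t • e ∈ U := by
  have : Tendsto (fun t : 𝕜 => t • e) (𝓝[≠] 0) (𝓝 0) :=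
    ((continuous_id.smul continuous_const).tendsto' 0 0 (zero_smul _ _)).mono_left
      nhdsWithin_le_nhds
  exact ((this.eventually_mem hU).and self_mem_nhdsWithin).exists.imp fun t ht => ⟨ht.2, ht.1⟩

theorem exists_ne_zero_tendsto_smul_zero [FirstCountableTopology X] (e : ℕ → X) :
    ∃ t : ℕ → 𝕜, (∀ n, t n ≠ 0) ∧ Tendsto (fun n => t n • e n) atTop (𝓝 0) := by
  obtain ⟨U, hU⟩ := (𝓝 (0 : X)).exists_antitone_basis
  choose t ht0 htU using fun n => exists_ne_zero_smul_mem_nhds (𝕜 := 𝕜) (e n) (hU.mem n)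
  exact ⟨t, ht0, hU.tendsto htU⟩

theorem DenseRange.exists_ne_zero_denseRange_smul_add [FirstCountableTopology X]
    [ContinuousAdd X] {c : ℕ → X} (hc : DenseRange c) (e : ℕ × ℕ → X) :
    ∃ t : ℕ × ℕ → 𝕜, (∀ p, t p ≠ 0) ∧ DenseRange fun p => t p • e p + c p.1 := by
  choose t ht0 ht using fun n => exists_ne_zero_tendsto_smul_zero (𝕜 := 𝕜) fun m => e (n, m)
  refine ⟨fun p => t p.1 p.2, fun p => ht0 _ _, dense_closure.1 (hc.mono ?_)⟩
  rintro _ ⟨n, rfl⟩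
  exact mem_closure_of_tendsto (by simpa using (ht n).add_const (c n))
    (Eventually.of_forall fun m => ⟨(n, m), rfl⟩)

end TopologicalVectorSpace

theorem Dense.exists_seq_mem_denseRange {X : Type*} [TopologicalSpace X]
    [TopologicalSpace.PseudoMetrizableSpace X] [TopologicalSpace.SeparableSpace X] {s : Set X}
    (hs : Dense s) (hne : s.Nonempty) : ∃ c : ℕ → X, (∀ n, c n ∈ s) ∧ DenseRange c := by
  have := ((TopologicalSpace.isSeparable_univ_iff.2 ‹_›).mono (subset_univ s)).separableSpace
  have := hne.to_subtype
  obtain ⟨c, hc⟩ := TopologicalSpace.exists_dense_seq s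
  exact ⟨fun n => c n, fun n => (c n).2, hs.denseRange_val.comp hc continuous_subtype_val⟩

theorem Cardinal.mk_nat_prod_nat_sum {κ : Type u} (hκ : ℵ₀ ≤ #κ) : #(ℕ × ℕ ⊕ κ) = #κ := by
  simp [add_eq_right hκ hκ]

theorem Cardinal.mk_nat_prod {κ : Type u} (hκ : ℵ₀ ≤ #κ) : #(ℕ × κ) = #κ := by
  simp [aleph0_mul_eq hκ]

theorem exists_dense_submodules_inf_eq_span {𝕜 : Type*} [NontriviallyNormedField 𝕜]
    {X : Type u} [AddCommGroup X] [Module 𝕜 X] [TopologicalSpace X] [IsTopologicalAddGroup X]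
    [ContinuousSMul 𝕜 X] [TopologicalSpace.PseudoMetrizableSpace X]
    [TopologicalSpace.SeparableSpace X] {W V : Submodule 𝕜 X} (hWV : Disjoint W V)
    (hV : Dense (V : Set X)) {x : X} (hxW : x ∈ W) (hx : x ≠ 0) (hW : ℵ₀ ≤ Module.rank 𝕜 W) :
    ∃ U : ℕ → Submodule 𝕜 X, ∀ k, Dense (U k : Set X) ∧ Module.rank 𝕜 (U k) = Module.rank 𝕜 W ∧
      x ∈ U k ∧ U k ≤ W ⊔ V ∧ Disjoint (U k) V ∧ ∀ l, l ≠ k → U k ⊓ U l = span 𝕜 {x} := by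
  obtain ⟨κ, hκ⟩ : ∃ κ : Type u, #κ = Module.rank 𝕜 W := ⟨_, mk_out _⟩
  have hβ : #(ℕ × ℕ ⊕ κ) = Module.rank 𝕜 W := by rw [mk_nat_prod_nat_sum (hκ ▸ hW), hκ]
  -- the `ℕ × ℕ` part of each block carries the vectors that make its span dense
  obtain ⟨B, hB, hBx, hBW⟩ := exists_linearIndependent_option hxW hx hW
    (ι := ℕ × (ℕ × ℕ ⊕ κ)) (by rw [mk_nat_prod (hβ ▸ hW), hβ])
  obtain ⟨c, hcV, hc⟩ := hV.exists_seq_mem_denseRange ⟨0, V.zero_mem⟩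
  choose t ht0 ht using fun k =>
    hc.exists_ne_zero_denseRange_smul_add (𝕜 := 𝕜) fun p => B (some (k, .inl p))
  -- scaled so that `t k p • (B + v) (some (k, .inl p)) = t k p • B (some (k, .inl p)) + c p.1`
  let v : Option (ℕ × (ℕ × ℕ ⊕ κ)) → X
    | some (k, .inl p) => (t k p)⁻¹ • c p.1
    | _ => 0
  have hvV : ∀ o, v o ∈ V := by
    rintro (_ | ⟨k, p | a⟩)
    exacts [V.zero_mem, V.smul_mem _ (hcV _), V.zero_mem]
  have hind := hB.mkQ_comp_add_of_disjoint hWV hBW hvV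
  have hGx : (B + v) none = x := by simp [v, hBx]
  let block (k : ℕ) := range (Option.map (Prod.mk k : ℕ × ℕ ⊕ κ → _))
  refine ⟨fun k => span 𝕜 ((B + v) '' block k), fun k => ⟨?_, ?_, ?_, ?_, ?_, fun l hl => ?_⟩⟩
  · refine (ht k).mono (range_subset_iff.2 fun p => ?_)
    have : t k p • (B + v) (some (k, .inl p)) = t k p • B (some (k, .inl p)) + c p.1 := by
      simp [v, smul_add, smul_inv_smul₀ (ht0 k p)]
    rw [SetLike.mem_coe, ← this]
    exact smul_mem _ _ (subset_span ⟨_, ⟨some (.inl p), rfl⟩, rfl⟩)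
  · have hinj : Function.Injective (Option.map (Prod.mk k : ℕ × ℕ ⊕ κ → _)) :=
      Option.map_injective (Prod.mk_right_injective k)
    have hli := (hind.of_comp _).comp _ hinj
    change Module.rank 𝕜 (span 𝕜 ((B + v) '' range _)) = _
    rw [← range_comp, rank_span hli, mk_range_eq _ hli.injective, mk_option, hβ, add_one_eq hW]
  · exact subset_span ⟨none, ⟨none, rfl⟩, hGx⟩
  · exact span_le.2 (image_subset_iff.2 fun o _ => add_mem_sup (hBW o) (hvV o))
  · simpa using (hind.disjoint_span_ker_of_comp _).mono_left (span_mono (image_subset_range _ _))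
  · have hblock : block k ∩ block l = {none} := Option.range_map_inter_range_map <|
      disjoint_left.2 fun _ ⟨_, ha⟩ ⟨_, hb⟩ => hl (by rw [← ha] at hb; exact congrArg Prod.fst hb)
    rw [(hind.of_comp _).span_image_inf_span_image, hblock, image_singleton, hGx]

section StrongerSets

variable {R X : Type*} [Ring R] [AddCommGroup X] [Module R X] {M N : Set X}
  {W V : Submodule R X}

theorem Submodule.disjoint_of_subset_union_zero (hMN : M ∩ N = ∅) (hW : (W : Set X) ⊆ M ∪ {0})
    (hV : (V : Set X) ⊆ N ∪ {0}) : Disjoint W V :=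
  disjoint_def.2 fun _ hyW hyV => by_contra fun hy =>
    hMN.subset ⟨(hW hyW).resolve_right hy, (hV hyV).resolve_right hy⟩

theorem Submodule.subset_union_zero_of_le_sup (hMN : M + N ⊆ M) (hW : (W : Set X) ⊆ M ∪ {0})
    (hV : (V : Set X) ⊆ N ∪ {0}) {U : Submodule R X} (hUWV : U ≤ W ⊔ V) (hUV : Disjoint U V) :
    (U : Set X) ⊆ M ∪ {0} := by
  intro y hyU
  obtain ⟨w, hw, v, hv, rfl⟩ := mem_sup.1 (hUWV hyU)
  by_cases hy : w + v = 0
  · exact Or.inr hy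
  have hwM : w ∈ M := (hW hw).resolve_right fun hw0 => hy <| disjoint_def.1 hUV _ hyU <| by
    rw [show w = 0 from hw0, zero_add]; exact hv
  rcases eq_or_ne v 0 with rfl | hv0
  · exact Or.inl (by simpa using hwM)
  · exact Or.inl (hMN (add_mem_add hwM ((hV hv).resolve_right hv0)))

end StrongerSets

theorem pointwise_lineable_to_infinitely_pointwise_dense_lineable_general
    {X : Type u} [AddCommGroup X] [Module ℝ X] [TopologicalSpace X]
    [IsTopologicalAddGroup X] [ContinuousSMul ℝ X]
    [TopologicalSpace.MetrizableSpace X] [TopologicalSpace.SeparableSpace X]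
    (α : Cardinal.{u}) (hα : Cardinal.aleph0 ≤ α)
    (M N : Set X) (hNne : N.Nonempty)
    (hstronger : M + N ⊆ M)
    (hdisj : M ∩ N = ∅)
    (hdenselin : ∃ V : Submodule ℝ X, Dense (V : Set X) ∧ (V : Set X) ⊆ N ∪ {0})
    (hM : ∀ x ∈ M, ∃ W : Submodule ℝ X,
      Module.rank ℝ W = α ∧ x ∈ W ∧ (W : Set X) ⊆ M ∪ {0}) :
    ∀ x ∈ M, ∃ W : ℕ → Submodule ℝ X, ∀ k : ℕ,
      Dense (W k : Set X) ∧
      Module.rank ℝ (W k) = α ∧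
      x ∈ W k ∧ (W k : Set X) ⊆ M ∪ {0} ∧
      ∀ l : ℕ, l ≠ k → W k ⊓ W l = Submodule.span ℝ {x} := by
  intro x hxM
  obtain ⟨V, hVdense, hVN⟩ := hdenselin
  obtain ⟨n, hn⟩ := hNne
  have hzero : (0 : X) ∉ M := fun h0 =>
    hdisj.subset ⟨by simpa using hstronger (add_mem_add h0 hn), hn⟩
  obtain ⟨W, hWrank, hxW, hWM⟩ := hM x hxM
  obtain ⟨U, hU⟩ := exists_dense_submodules_inf_eq_span
    (disjoint_of_subset_union_zero hdisj hWM hVN) hVdense hxW (ne_of_mem_of_not_mem hxM hzero)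
    (hWrank ▸ hα)
  refine ⟨U, fun k => ?_⟩
  obtain ⟨hdense, hrank, hxU, hUWV, hUV, hinf⟩ := hU k
  exact ⟨hdense, hrank.trans hWrank, hxU, subset_union_zero_of_le_sup hstronger hWM hVN hUWV hUV,
    hinf⟩

/-- In a metrizable separable topological vector space, if `M` is stronger
than a dense-lineable set `N` disjoint from `M`, then pointwise `α`-lineability of `M`
implies infinite pointwise `α`-dense lineability of `M`. -/
theorem pointwise_lineable_to_infinitely_pointwise_dense_lineable
    {X : Type u} [AddCommGroup X] [Module ℝ X] [TopologicalSpace X]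
    [IsTopologicalAddGroup X] [ContinuousSMul ℝ X]
    [TopologicalSpace.MetrizableSpace X] [TopologicalSpace.SeparableSpace X]
    (α : Cardinal.{u}) (hα : Cardinal.aleph0 ≤ α)
    (M N : Set X) (hMne : M.Nonempty) (hNne : N.Nonempty)
    (hstronger : M + N ⊆ M)
    (hdisj : M ∩ N = ∅)
    (hdenselin : ∃ V : Submodule ℝ X, Dense (V : Set X) ∧ (V : Set X) ⊆ N ∪ {0})
    (hM : ∀ x ∈ M, ∃ W : Submodule ℝ X,
      Module.rank ℝ W = α ∧ x ∈ W ∧ (W : Set X) ⊆ M ∪ {0}) :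
    ∀ x ∈ M, ∃ W : ℕ → Submodule ℝ X, ∀ k : ℕ,
      Dense (W k : Set X) ∧
      Module.rank ℝ (W k) = α ∧
      x ∈ W k ∧ (W k : Set X) ⊆ M ∪ {0} ∧
      ∀ l : ℕ, l ≠ k → W k ⊓ W l = Submodule.span ℝ {x} :=
  pointwise_lineable_to_infinitely_pointwise_dense_lineable_general α hα M N hNne hstronger hdisj
    hdenselin hM
end

section
/- Let X be a metrizable separable topological vector space over ℝ, let α be an infinite cardinal, and let M be a nonempty subset of X for which there exists a nonempty subset N ⊆ X such that M + N ⊆ M, M ∩ N = ∅, and there exists a dense linear subspace V of X with V ⊆ N ∪ {0}. If M is pointwise α-lineable, then M is pointwise α-dense lineable: for every x ∈ M there exists a dense linear subspace W of X with dim(W) = α and x ∈ W ⊆ M ∪ {0}. -/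
open Pointwise Set Filter Function Topology

universe u

/-!
Take a subspace `W₀ ⊆ M ∪ {0}` of dimension `α` through `x` and a dense subspace
`V ⊆ N ∪ {0}`. For every linear map `T : W₀ → V` the subspace `{w + T w | w ∈ W₀}` still lies in
`M ∪ {0}`, because `M + N ⊆ M`, and `w ↦ w + T w` is injective, because `0 ∉ M`; if `T x = 0` it
also contains `x`. Extend `x` to a basis of `W₀`, fix a dense sequence `(vₙ)` in `V` and, for each
`n`, infinitely many further basis vectors `e_{n,k}` with scalars `r_{n,k} ≠ 0` such that
`r_{n,k} e_{n,k} → 0` as `k → ∞` (first countability). Setting `T e_{n,k} = r_{n,k}⁻¹ vₙ`, the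
vectors `r_{n,k} e_{n,k} + vₙ` of the perturbed subspace converge to `vₙ`, so it is dense.
-/

theorem Dense.exists_denseRange_seq_mem {X : Type*} [TopologicalSpace X]
    [TopologicalSpace.PseudoMetrizableSpace X] [TopologicalSpace.SeparableSpace X]
    {s : Set X} (hs : Dense s) (hne : s.Nonempty) : ∃ u : ℕ → X, DenseRange u ∧ ∀ n, u n ∈ s := by
  have := (TopologicalSpace.IsSeparable.of_separableSpace s).separableSpace
  have := hne.to_subtype
  obtain ⟨u, hu⟩ := TopologicalSpace.exists_dense_seq s
  exact ⟨Subtype.val ∘ u, hs.denseRange_val.comp hu continuous_subtype_val, fun n => (u n).2⟩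

theorem exists_ne_zero_smul_tendsto_zero {𝕜 X : Type*} [NontriviallyNormedField 𝕜]
    [AddCommGroup X] [Module 𝕜 X] [TopologicalSpace X] [ContinuousSMul 𝕜 X]
    [FirstCountableTopology X] (e : ℕ → X) :
    ∃ r : ℕ → 𝕜, (∀ k, r k ≠ 0) ∧ Tendsto (fun k => r k • e k) atTop (𝓝 0) := by
  obtain ⟨U, hU⟩ := (𝓝 (0 : X)).exists_antitone_basis
  have hsmall : ∀ k, ∃ r : 𝕜, r ≠ 0 ∧ r • e k ∈ U k := fun k =>
    have hlim : Tendsto (fun r : 𝕜 => r • e k) (𝓝 0) (𝓝 0) := by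
      simpa using (tendsto_id (x := 𝓝 (0 : 𝕜))).smul_const (e k)
    (show ∀ᶠ r in 𝓝[≠] (0 : 𝕜), r ≠ 0 ∧ r • e k ∈ U k from
      eventually_mem_nhdsWithin.and (nhdsWithin_le_nhds (hlim (hU.mem k)))).exists
  choose r hr0 hrU using hsmall
  exact ⟨r, hr0, hU.tendsto hrU⟩

theorem zero_notMem_of_add_subset {X : Type*} [AddZeroClass X] {M N : Set X}
    (hN : N.Nonempty) (hMN : M + N ⊆ M) (hdisj : Disjoint M N) : (0 : X) ∉ M := by
  obtain ⟨n, hn⟩ := hN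
  intro h0
  have hnM : n ∈ M := by simpa using hMN (add_mem_add h0 hn)
  exact hdisj.notMem_of_mem_left hnM hn

theorem exists_basis_apply_eq_and_injective_ne {K : Type*} {E : Type u} [DivisionRing K]
    [AddCommGroup E] [Module K E] {x : E} (hx : x ≠ 0) (hE : Cardinal.aleph0 ≤ Module.rank K E) :
    ∃ (ι : Type u) (b : Module.Basis ι K E) (i₀ : ι) (g : ℕ × ℕ → ι),
      Injective g ∧ b i₀ = x ∧ ∀ p, g p ≠ i₀ := by
  have hs : LinearIndepOn K id ({x} : Set E) := (linearIndepOn_singleton_iff K).mpr hx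
  let b := Module.Basis.extend hs
  let i₀ : hs.extend (subset_univ _) := ⟨x, hs.subset_extend _ rfl⟩
  have : Infinite (hs.extend (subset_univ _)) := by
    rw [Cardinal.infinite_iff, b.mk_eq_rank'']
    exact hE
  let e := (finite_singleton i₀).infinite_compl.natEmbedding
  exact ⟨_, b, i₀, fun p => e (Nat.pairEquiv p),
    Subtype.val_injective.comp (e.injective.comp Nat.pairEquiv.injective),
    Module.Basis.extend_apply_self hs i₀, fun p => (e _).2⟩

namespace Submodule

section Perturbation

variable {R X : Type*} [Ring R] [AddCommGroup X] [Module R X] {W V : Submodule R X}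

def perturbedSubtype (T : W →ₗ[R] V) : W →ₗ[R] X := W.subtype + V.subtype ∘ₗ T

@[simp]
theorem perturbedSubtype_apply (T : W →ₗ[R] V) (w : W) :
    perturbedSubtype T w = (w : X) + T w := rfl

variable {M N : Set X}

theorem perturbedSubtype_mem_of_ne_zero (hMN : M + N ⊆ M) (hW : (W : Set X) ⊆ M ∪ {0})
    (hV : (V : Set X) ⊆ N ∪ {0}) (T : W →ₗ[R] V) {w : W} (hw : w ≠ 0) :
    perturbedSubtype T w ∈ M := by
  have hwM : (w : X) ∈ M := (hW w.2).resolve_right (by simpa using hw)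
  rcases hV (T w).2 with hN | hzero
  · exact hMN (add_mem_add hwM hN)
  · simpa [mem_singleton_iff.mp hzero] using hwM

theorem range_perturbedSubtype_subset (hMN : M + N ⊆ M) (hW : (W : Set X) ⊆ M ∪ {0})
    (hV : (V : Set X) ⊆ N ∪ {0}) (T : W →ₗ[R] V) :
    (LinearMap.range (perturbedSubtype T) : Set X) ⊆ M ∪ {0} := by
  rintro _ ⟨w, rfl⟩
  by_cases hw : w = 0
  · simp [hw]
  · exact Or.inl (perturbedSubtype_mem_of_ne_zero hMN hW hV T hw)

theorem perturbedSubtype_injective (hMN : M + N ⊆ M) (hM : (0 : X) ∉ M)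
    (hW : (W : Set X) ⊆ M ∪ {0}) (hV : (V : Set X) ⊆ N ∪ {0}) (T : W →ₗ[R] V) :
    Injective (perturbedSubtype T) := by
  refine (injective_iff_map_eq_zero _).mpr fun w hw => ?_
  by_contra hne
  exact hM (hw ▸ perturbedSubtype_mem_of_ne_zero hMN hW hV T hne)

end Perturbation

section Density

variable {𝕜 X : Type*} [NontriviallyNormedField 𝕜] [AddCommGroup X] [Module 𝕜 X]
  [TopologicalSpace X] [IsTopologicalAddGroup X] [ContinuousSMul 𝕜 X] [FirstCountableTopology X]
  {W V : Submodule 𝕜 X}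

theorem exists_perturbedSubtype_closure_range {ι : Type*} (b : Module.Basis ι 𝕜 W)
    {g : ℕ × ℕ → ι} (hg : Injective g) (v : ℕ → V) :
    ∃ T : W →ₗ[𝕜] V, (∀ i ∉ Set.range g, T (b i) = 0) ∧
      ∀ n, (v n : X) ∈ closure (LinearMap.range (perturbedSubtype T) : Set X) := by
  choose r hr0 hr using fun n =>
    exists_ne_zero_smul_tendsto_zero (𝕜 := 𝕜) fun k => (b (g (n, k)) : X)
  let T := b.constr 𝕜 (extend g (fun p => (r p.1 p.2)⁻¹ • v p.1) 0)
  refine ⟨T, fun i hi => by simp [T, extend_apply' _ _ _ hi], fun n => ?_⟩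
  have hT : ∀ k,
      perturbedSubtype T (r n k • b (g (n, k))) = r n k • (b (g (n, k)) : X) + v n := by
    intro k
    simp [T, hg.extend_apply, hr0]
  refine mem_closure_of_tendsto (b := atTop)
    (f := fun k => perturbedSubtype T (r n k • b (g (n, k)))) ?_
    (Eventually.of_forall fun k => LinearMap.mem_range_self _ _)
  simp_rw [hT]
  simpa using (hr n).add_const (v n : X)

theorem exists_perturbedSubtype_dense {x : X} (hxW : x ∈ W) (hx : x ≠ 0)
    (hW : Cardinal.aleph0 ≤ Module.rank 𝕜 W) {s : ℕ → X} (hs : DenseRange s)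
    (hsV : ∀ n, s n ∈ V) :
    ∃ T : W →ₗ[𝕜] V, T ⟨x, hxW⟩ = 0 ∧ Dense (LinearMap.range (perturbedSubtype T) : Set X) := by
  obtain ⟨ι, b, i₀, g, hg, hbx, hgi₀⟩ :=
    exists_basis_apply_eq_and_injective_ne (x := (⟨x, hxW⟩ : W)) (by simpa using hx) hW
  obtain ⟨T, hT, hcl⟩ := exists_perturbedSubtype_closure_range b hg fun n => ⟨s n, hsV n⟩
  refine ⟨T, hbx ▸ hT i₀ fun ⟨p, hp⟩ => hgi₀ p hp, dense_closure.mp (hs.mono ?_)⟩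
  rintro _ ⟨n, rfl⟩
  exact hcl n

end Density

end Submodule

open Submodule in
theorem pointwise_lineable_to_pointwise_dense_lineable_general
    {X : Type u} [AddCommGroup X] [Module ℝ X] [TopologicalSpace X]
    [IsTopologicalAddGroup X] [ContinuousSMul ℝ X]
    [TopologicalSpace.MetrizableSpace X] [TopologicalSpace.SeparableSpace X]
    (α : Cardinal.{u}) (hα : Cardinal.aleph0 ≤ α)
    (M N : Set X) (hNne : N.Nonempty)
    (hstronger : M + N ⊆ M)
    (hdisj : M ∩ N = ∅)
    (hdenselin : ∃ V : Submodule ℝ X, Dense (V : Set X) ∧ (V : Set X) ⊆ N ∪ {0})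
    (hM : ∀ x ∈ M, ∃ W : Submodule ℝ X,
      Module.rank ℝ W = α ∧ x ∈ W ∧ (W : Set X) ⊆ M ∪ {0}) :
    ∀ x ∈ M, ∃ W : Submodule ℝ X,
      Dense (W : Set X) ∧ Module.rank ℝ W = α ∧ x ∈ W ∧ (W : Set X) ⊆ M ∪ {0} := by
  obtain ⟨V, hVd, hVN⟩ := hdenselin
  have h0M : (0 : X) ∉ M :=
    zero_notMem_of_add_subset hNne hstronger (disjoint_iff_inter_eq_empty.mpr hdisj)
  obtain ⟨s, hs, hsV⟩ := hVd.exists_denseRange_seq_mem ⟨0, V.zero_mem⟩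
  intro x hx
  obtain ⟨W₀, hrank, hxW₀, hW₀M⟩ := hM x hx
  obtain ⟨T, hTx, hdense⟩ := exists_perturbedSubtype_dense hxW₀ (ne_of_mem_of_not_mem hx h0M)
    (hα.trans_eq hrank.symm) hs hsV
  refine ⟨LinearMap.range (perturbedSubtype T), hdense, ?_, ⟨⟨x, hxW₀⟩, by simp [hTx]⟩,
    range_perturbedSubtype_subset hstronger hW₀M hVN T⟩
  rw [rank_range_of_injective _ (perturbedSubtype_injective hstronger h0M hW₀M hVN T),
    hrank]

/-- In a metrizable separable topological vector space, if `M` is stronger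
than a dense-lineable set `N` disjoint from `M`, then pointwise `α`-lineability of `M`
implies pointwise `α`-dense lineability of `M`. -/
theorem pointwise_lineable_to_pointwise_dense_lineable
    {X : Type u} [AddCommGroup X] [Module ℝ X] [TopologicalSpace X]
    [IsTopologicalAddGroup X] [ContinuousSMul ℝ X]
    [TopologicalSpace.MetrizableSpace X] [TopologicalSpace.SeparableSpace X]
    (α : Cardinal.{u}) (hα : Cardinal.aleph0 ≤ α)
    (M N : Set X) (hMne : M.Nonempty) (hNne : N.Nonempty)
    (hstronger : M + N ⊆ M)
    (hdisj : M ∩ N = ∅)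
    (hdenselin : ∃ V : Submodule ℝ X, Dense (V : Set X) ∧ (V : Set X) ⊆ N ∪ {0})
    (hM : ∀ x ∈ M, ∃ W : Submodule ℝ X,
      Module.rank ℝ W = α ∧ x ∈ W ∧ (W : Set X) ⊆ M ∪ {0}) :
    ∀ x ∈ M, ∃ W : Submodule ℝ X,
      Dense (W : Set X) ∧ Module.rank ℝ W = α ∧ x ∈ W ∧ (W : Set X) ⊆ M ∪ {0} :=
  pointwise_lineable_to_pointwise_dense_lineable_general α hα M N hNne hstronger hdisj hdenselin hM
end

section
/- Let N ≥ 1 and let A ⊆ ℝ^N be not relatively compact (equivalently, unbounded). Then there exists a function w : ℝ^N → ℝ such that w is infinitely differentiable on ℝ^N, w ∈ L^p(ℝ^N) with respect to Lebesgue measure for every real p ∈ [1, ∞), and w is unbounded on A, i.e. sup_{x ∈ A} |w(x)| = +∞. -/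
open MeasureTheory Filter Topology

noncomputable section

/-- Euclidean space `ℝ^N`. -/
abbrev RN (N : ℕ) := EuclideanSpace ℝ (Fin N)

/-- The space `X = C^∞(ℝ^N) ∩ ⋂_{p ∈ [1,∞)} L^p(ℝ^N)` of infinitely differentiable
functions that are `p`-integrable for every real `p ≥ 1`. -/
def SmoothIntegrable (N : ℕ) : Set (RN N → ℝ) :=
  {f | ContDiff ℝ (⊤ : ℕ∞) f ∧
       ∀ p : ℝ, 1 ≤ p → MemLp f (ENNReal.ofReal p) volume}

/-- `f` is unbounded on `A`, i.e. `sup_{x ∈ A} |f x| = +∞`. -/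
def UnboundedOn {N : ℕ} (A : Set (RN N)) (f : RN N → ℝ) : Prop :=
  ∀ C : ℝ, ∃ x ∈ A, C < |f x|

/-- `nBC∞I(A) = {f ∈ X : f is unbounded on A}`. -/
def nBCI {N : ℕ} (A : Set (RN N)) : Set (RN N → ℝ) :=
  {f | f ∈ SmoothIntegrable N ∧ UnboundedOn A f}

open Metric Set Function
open scoped ENNReal

/-! Pick points `aₙ ∈ A` at mutual distance at least `1`, which is possible because `A` is
unbounded, and place at `aₙ` a smooth bump of height `n` supported in a ball of measure at most
`2⁻ⁿ`. The supports are disjoint and locally finite, so the sum `w` of the bumps is smooth,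
`w aₙ = n`, and `∫ |w|ᵖ ≤ ∑ nᵖ 2⁻ⁿ < ∞` for every `p`. -/

section MetricSpace

variable {X : Type*} [PseudoMetricSpace X]

theorem exists_seq_mem_pairwise_le_dist_of_not_isBounded {A : Set X}
    (hA : ¬Bornology.IsBounded A) (ε : ℝ) :
    ∃ a : ℕ → X, (∀ n, a n ∈ A) ∧ Pairwise fun m n => ε ≤ dist (a m) (a n) := by
  have : Std.Symm fun x y : X => ε ≤ dist x y := ⟨fun x y h => by rwa [dist_comm]⟩
  refine exists_seq_of_forall_finset_exists' (· ∈ A) (fun x y => ε ≤ dist x y) fun s _ => ?_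
  obtain ⟨y, hyA, hy⟩ := not_subset.1 fun h => hA (s.finite_toSet.isBounded.thickening.subset h)
  simp only [mem_thickening_iff, not_exists, not_and, not_lt] at hy
  exact ⟨y, hyA, fun x hx => dist_comm x y ▸ hy x hx⟩

variable {ι : Type*} {a : ι → X} {s : ι → Set X} {ε : ℝ}

theorem subsingleton_setOf_inter_ball_nonempty (hsep : Pairwise fun i j => ε ≤ dist (a i) (a j))
    (hs : ∀ i, s i ⊆ ball (a i) (ε / 4)) (x : X) :
    {i | (s i ∩ ball x (ε / 4)).Nonempty}.Subsingleton := by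
  rintro i ⟨y, hyi, hyx⟩ j ⟨z, hzj, hzx⟩
  by_contra hij
  have hyi := mem_ball'.1 (hs i hyi)
  have hzj := mem_ball.1 (hs j hzj)
  rw [mem_ball] at hyx
  rw [mem_ball'] at hzx
  linarith [hsep hij, dist_triangle4 (a i) y x z, dist_triangle (a i) z (a j)]

theorem locallyFinite_of_pairwise_le_dist (hε : 0 < ε)
    (hsep : Pairwise fun i j => ε ≤ dist (a i) (a j)) (hs : ∀ i, s i ⊆ ball (a i) (ε / 4)) :
    LocallyFinite s := fun x =>
  ⟨ball x (ε / 4), ball_mem_nhds x (by positivity),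
    (subsingleton_setOf_inter_ball_nonempty hsep hs x).finite⟩

theorem exists_forall_ne_notMem_of_pairwise_le_dist [Nonempty ι] (hε : 0 < ε)
    (hsep : Pairwise fun i j => ε ≤ dist (a i) (a j)) (hs : ∀ i, s i ⊆ ball (a i) (ε / 4))
    (x : X) : ∃ i, ∀ j ≠ i, x ∉ s j := by
  by_cases h : ∃ i, x ∈ s i
  · obtain ⟨i, hi⟩ := h
    refine ⟨i, fun j hji hj => hji (subsingleton_setOf_inter_ball_nonempty hsep hs x ?_ ?_)⟩
    · exact ⟨x, hj, mem_ball_self (by positivity)⟩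
    · exact ⟨x, hi, mem_ball_self (by positivity)⟩
  · push Not at h
    exact ⟨Classical.arbitrary ι, fun j _ => h j⟩

end MetricSpace

theorem exists_measure_ball_lt {X : Type*} [MetricSpace X] [MeasurableSpace X]
    [OpensMeasurableSpace X] (μ : Measure X) [NullSingletonClass μ] [IsLocallyFiniteMeasure μ]
    (x : X) {δ : ℝ≥0∞} (hδ : 0 < δ) {R : ℝ} (hR : 0 < R) :
    ∃ r ∈ Ioo 0 R, μ (ball x r) < δ := by
  obtain ⟨t, ht, hμt⟩ := μ.finiteAt_nhds x
  obtain ⟨r₀, hr₀, hsub⟩ := Metric.mem_nhds_iff.1 ht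
  have hfin : ∃ r > 0, μ (thickening r {x}) ≠ ∞ :=
    ⟨r₀, hr₀, by rw [thickening_singleton]; exact ((measure_mono hsub).trans_lt hμt).ne⟩
  have hlim := tendsto_measure_thickening_of_isClosed hfin isClosed_singleton
  simp only [thickening_singleton, measure_singleton] at hlim
  obtain ⟨r, hr, hrR⟩ := ((hlim.eventually (gt_mem_nhds hδ)).and (Ioo_mem_nhdsGT hR)).exists
  exact ⟨r, hrR, hr⟩

theorem ENNReal.tsum_natCast_rpow_mul_inv_two_pow_ne_top {p : ℝ} (hp : 0 < p) :
    ∑' n : ℕ, (n : ℝ≥0∞) ^ p * 2⁻¹ ^ n ≠ ∞ := by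
  set k := ⌈p⌉₊
  have hle : ∀ n : ℕ, (n : ℝ≥0∞) ^ p ≤ (n : ℝ≥0∞) ^ k := fun n => by
    rcases n.eq_zero_or_pos with rfl | hn
    · simp [ENNReal.zero_rpow_of_pos hp]
    · rw [← ENNReal.rpow_natCast]
      exact ENNReal.rpow_le_rpow_of_exponent_le (mod_cast hn) (Nat.le_ceil p)
  have hsum : Summable fun n : ℕ => (n : NNReal) ^ k * 2⁻¹ ^ n := by
    rw [← NNReal.summable_coe]
    push_cast
    exact summable_pow_mul_geometric_of_norm_lt_one k (by norm_num)
  refine ne_top_of_le_ne_top (ENNReal.tsum_coe_ne_top_iff_summable.2 hsum)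
    (ENNReal.tsum_le_tsum fun n => ?_)
  push_cast
  gcongr
  exact hle n

theorem exists_bumps_measure_ball_le {E : Type*} [NormedAddCommGroup E] [MeasurableSpace E]
    [OpensMeasurableSpace E] (μ : Measure E) [NullSingletonClass μ]
    [IsLocallyFiniteMeasure μ] (a : ℕ → E) {R : ℝ} (hR : 0 < R) :
    ∃ φ : ∀ n, ContDiffBump (a n), ∀ n, (φ n).rOut ≤ R ∧ μ (ball (a n) (φ n).rOut) ≤ 2⁻¹ ^ n := by
  choose r hr hμr using fun n => exists_measure_ball_lt μ (a n) (δ := 2⁻¹ ^ n)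
    (ENNReal.pow_pos (ENNReal.inv_pos.2 ENNReal.ofNat_ne_top) n) hR
  exact ⟨fun n => ⟨r n / 2, r n, half_pos (hr n).1, half_lt_self (hr n).1⟩,
    fun n => ⟨(hr n).2.le, (hμr n).le⟩⟩

section Spikes

variable {E : Type*} [NormedAddCommGroup E] [NormedSpace ℝ E] [HasContDiffBump E] {a : ℕ → E}

theorem ContDiffBump.support_subset_ball {c : E} (f : ContDiffBump c) {r : ℝ} (hr : f.rOut ≤ r) :
    support f ⊆ ball c r :=
  f.support_eq ▸ ball_subset_ball hr

def spikes (φ : ∀ n, ContDiffBump (a n)) (x : E) : ℝ :=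
  ∑ᶠ n : ℕ, n * φ n x

variable {ε : ℝ} {φ : ∀ n, ContDiffBump (a n)}

variable (hε : 0 < ε) (hsep : Pairwise fun m n => ε ≤ dist (a m) (a n))
  (hφ : ∀ n, (φ n).rOut ≤ ε / 4)
include hε hsep hφ

theorem contDiff_spikes {k : ℕ∞} : ContDiff ℝ k (spikes φ) := by
  have hfin : LocallyFinite fun n : ℕ => support fun x => (n : ℝ) * φ n x :=
    (locallyFinite_of_pairwise_le_dist hε hsep fun n => (φ n).support_subset_ball (hφ n)).subset
      fun n => support_mul_subset_right _ _
  exact contMDiff_iff_contDiff.1 <| contMDiff_finsum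
    (fun n => contMDiff_iff_contDiff.2 (contDiff_const.mul (φ n).contDiff)) hfin

theorem exists_spikes_eq (x : E) : ∃ m : ℕ, spikes φ x = m * φ m x := by
  obtain ⟨m, hm⟩ := exists_forall_ne_notMem_of_pairwise_le_dist hε hsep
    (fun n => (φ n).support_subset_ball (hφ n)) x
  refine ⟨m, finsum_eq_single _ m fun n hn => ?_⟩
  rw [notMem_support.1 (hm n hn), mul_zero]

theorem spikes_center (n : ℕ) : spikes φ (a n) = n := by
  have hone : φ n (a n) = 1 := (φ n).one_of_mem_closedBall (mem_closedBall_self (φ n).rIn_pos.le)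
  refine (finsum_eq_single _ n fun m hm => ?_).trans (by rw [hone, mul_one])
  have : (φ m).rOut ≤ dist (a n) (a m) := by linarith [hφ m, hsep hm.symm]
  rw [(φ m).zero_of_le_dist this, mul_zero]

theorem enorm_spikes_rpow_le {p : ℝ} (hp : 0 < p) (x : E) :
    ‖spikes φ x‖ₑ ^ p ≤
      ∑' n : ℕ, (ball (a n) (φ n).rOut).indicator (fun _ => (n : ℝ≥0∞) ^ p) x := by
  obtain ⟨m, hm⟩ := exists_spikes_eq hε hsep hφ x
  refine hm ▸ le_trans ?_ (ENNReal.le_tsum m)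
  by_cases hx : x ∈ ball (a m) (φ m).rOut
  · rw [indicator_of_mem hx, enorm_mul, Real.enorm_natCast, Real.enorm_of_nonneg (φ m).nonneg]
    gcongr
    exact mul_le_of_le_one_right' (ENNReal.ofReal_le_one.2 (φ m).le_one)
  · rw [← (φ m).support_eq, notMem_support] at hx
    simp [hx, ENNReal.zero_rpow_of_pos hp]

variable [MeasurableSpace E] [BorelSpace E] {μ : Measure E}

theorem lintegral_enorm_spikes_rpow_le {p : ℝ} (hp : 0 < p) :
    ∫⁻ x, ‖spikes φ x‖ₑ ^ p ∂μ ≤ ∑' n : ℕ, (n : ℝ≥0∞) ^ p * μ (ball (a n) (φ n).rOut) :=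
  calc ∫⁻ x, ‖spikes φ x‖ₑ ^ p ∂μ
      ≤ ∫⁻ x, ∑' n : ℕ, (ball (a n) (φ n).rOut).indicator (fun _ => (n : ℝ≥0∞) ^ p) x ∂μ :=
        lintegral_mono (enorm_spikes_rpow_le hε hsep hφ hp)
    _ = ∑' n : ℕ, (n : ℝ≥0∞) ^ p * μ (ball (a n) (φ n).rOut) := by
        rw [lintegral_tsum fun n => (measurable_const.indicator measurableSet_ball).aemeasurable]
        simp_rw [lintegral_indicator_const measurableSet_ball]

theorem memLp_spikes (hμ : ∀ n, μ (ball (a n) (φ n).rOut) ≤ 2⁻¹ ^ n) {q : ℝ≥0∞} (hq : q ≠ ∞) :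
    MemLp (spikes φ) q μ := by
  have hmeas := (contDiff_spikes hε hsep hφ (k := 0)).continuous.aestronglyMeasurable (μ := μ)
  rcases eq_or_ne q 0 with rfl | hq0
  · exact memLp_zero_iff_aestronglyMeasurable.2 hmeas
  have hp : 0 < q.toReal := ENNReal.toReal_pos hq0 hq
  refine ⟨hmeas, (eLpNorm_lt_top_iff_lintegral_rpow_enorm_lt_top hq0 hq).2 ?_⟩
  refine (lintegral_enorm_spikes_rpow_le hε hsep hφ hp).trans_lt (lt_top_iff_ne_top.2 ?_)
  refine ne_top_of_le_ne_top (ENNReal.tsum_natCast_rpow_mul_inv_two_pow_ne_top hp)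
    (ENNReal.tsum_le_tsum fun n => ?_)
  gcongr
  exact hμ n

end Spikes

theorem exists_smooth_integrable_unbounded_general (N : ℕ)
    (A : Set (RN N)) (hA : ¬ Bornology.IsBounded A) :
    ∃ w : RN N → ℝ, w ∈ SmoothIntegrable N ∧ UnboundedOn A w := by
  -- Needed for `volume` to have no atoms: on `RN 0` it is a Dirac mass.
  have : Nontrivial (RN N) := by
    by_contra h
    rw [not_nontrivial_iff_subsingleton] at h
    exact hA (Bornology.IsBounded.all A)
  obtain ⟨a, haA, hsep⟩ := exists_seq_mem_pairwise_le_dist_of_not_isBounded hA 1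
  obtain ⟨φ, hφ⟩ := exists_bumps_measure_ball_le volume a (R := 1 / 4) (by norm_num)
  have hφr : ∀ n, (φ n).rOut ≤ 1 / 4 := fun n => (hφ n).1
  refine ⟨spikes φ, ⟨contDiff_spikes one_pos hsep hφr, fun p _ => ?_⟩, fun C => ?_⟩
  · exact memLp_spikes one_pos hsep hφr (fun n => (hφ n).2) ENNReal.ofReal_ne_top
  · obtain ⟨n, hn⟩ := exists_nat_gt C
    exact ⟨a n, haA n, by rwa [spikes_center one_pos hsep hφr, Nat.abs_cast]⟩

/-- For any not relatively compact (= unbounded) `A ⊆ ℝ^N` there is a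
smooth function, `p`-integrable for all `p ∈ [1,∞)`, which is unbounded on `A`. -/
theorem exists_smooth_integrable_unbounded (N : ℕ) (hN : 1 ≤ N)
    (A : Set (RN N)) (hA : ¬ Bornology.IsBounded A) :
    ∃ w : RN N → ℝ, w ∈ SmoothIntegrable N ∧ UnboundedOn A w :=
  exists_smooth_integrable_unbounded_general N A hA
end
end

section
/- Let N ≥ 1 and let A ⊆ ℝ^N be not relatively compact (equivalently, unbounded). Then the set nBC∞I(A) is pointwise 𝔠-lineable in X: for every f ∈ nBC∞I(A) there exists a linear subspace W of the space of functions ℝ^N → ℝ such that dim(W) = 𝔠, f ∈ W, and W ⊆ nBC∞I(A) ∪ {0}. -/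
/-!
Choose points `y k ∈ A`, pairwise at distance `≥ 1`, with `|f (y k)| → ∞`, and a dense sequence
`d` in `[0, 1]`. A locally finite sum of bumps gives a smooth `u : ℝ^N → [0, 1]` with
`u (y (Nat.pair m j)) = d m`, so every value `d m` is attained along a subsequence on which `|f|`
blows up. Hence for continuous `g`, the function `f * g ∘ u` is either `0` (when `g` vanishes on
`[0, 1]`) or unbounded on `A` (when `g (d m) ≠ 0` for some `m`); it stays in every `L^p` because
`g ∘ u` is bounded. Take `W` to be the image of the span of the exponentials `t ↦ exp (c * t)`,
`c ∈ ℝ`, under `g ↦ f * g ∘ u`: an analytic `g` vanishing on `[0, 1]` is `0`, so this map is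
injective on the span, the exponentials are linearly independent by Dedekind's lemma, and `c = 0`
gives `f`.
-/

open MeasureTheory Filter Topology

noncomputable section

open Set Function Metric

theorem linearIndependent_exp_mul :
    LinearIndependent ℝ (fun (c : ℝ) (t : ℝ) => Real.exp (c * t)) := by
  let e : ℝ → (Multiplicative ℝ →* ℝ) := fun c =>
    { toFun := fun t => Real.exp (c * t.toAdd)
      map_one' := by simp
      map_mul' := fun s t => by simp [mul_add, Real.exp_add] }
  have he : Injective e := fun c c' h => by
    simpa [e] using congrArg (fun φ : Multiplicative ℝ →* ℝ => φ (Multiplicative.ofAdd 1)) h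
  exact (linearIndependent_monoidHom (Multiplicative ℝ) ℝ).comp e he

theorem analyticOnNhd_of_mem_span_exp_mul {g : ℝ → ℝ}
    (hg : g ∈ Submodule.span ℝ (range fun (c : ℝ) (t : ℝ) => Real.exp (c * t))) :
    AnalyticOnNhd ℝ g univ := by
  induction hg using Submodule.span_induction with
  | mem g hg =>
    obtain ⟨c, rfl⟩ := hg
    exact fun t _ => analyticAt_rexp.comp (analyticAt_const.mul analyticAt_id)
  | zero => exact analyticOnNhd_const
  | add g h _ _ hg hh => exact hg.add hh
  | smul a g _ hg => exact hg.const_smul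

theorem AnalyticOnNhd.eq_zero_of_eqOn_Icc {g : ℝ → ℝ} (hg : AnalyticOnNhd ℝ g univ) {a b : ℝ}
    (hab : a < b) (h : EqOn g 0 (Icc a b)) : g = 0 := by
  have hmid : Icc a b ∈ 𝓝 ((a + b) / 2) := Icc_mem_nhds (by linarith) (by linarith)
  exact funext fun t => hg.eqOn_zero_of_preconnected_of_eventuallyEq_zero isPreconnected_univ
    (mem_univ _) (mem_of_superset hmid h) (mem_univ t)

theorem exists_contDiff_interpolating_of_separated {ι E : Type*} [NormedAddCommGroup E]
    [NormedSpace ℝ E] [HasContDiffBump E] {y : ι → E} {δ : ℝ} (hδ : 0 < δ)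
    (hy : Pairwise fun j k => δ ≤ dist (y j) (y k)) {v : ι → ℝ} (hv : ∀ k, v k ∈ Icc (0 : ℝ) 1) :
    ∃ u : E → ℝ, ContDiff ℝ (⊤ : ℕ∞) u ∧ (∀ x, u x ∈ Icc (0 : ℝ) 1) ∧ ∀ k, u (y k) = v k := by
  let b : ContDiffBump (0 : E) := ⟨δ / 6, δ / 3, by positivity, by linarith⟩
  let φ : ι → E → ℝ := fun k x => v k * b (x - y k)
  have hφ : ∀ k x, φ k x ≠ 0 → dist x (y k) < δ / 3 := fun k x h => by
    have : x - y k ∈ support b := right_ne_zero_of_mul h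
    simpa [b.support_eq, dist_eq_norm] using this
  have hunique : ∀ x j k, dist x (y j) < δ / 2 → dist x (y k) < δ / 2 → j = k := by
    intro x j k hj hk
    by_contra hjk
    linarith [hy hjk, dist_triangle_left (y j) (y k) x]
  have hsum : ∀ x k, dist x (y k) < δ / 2 → ∑ᶠ j, φ j x = φ k x := fun x k hk =>
    finsum_eq_single _ k fun j hjk => by
      by_contra h
      exact hjk (hunique x j k (by linarith [hφ j x h]) hk)
  have hlf : LocallyFinite fun k => support (φ k) := fun x => by
    refine ⟨ball x (δ / 6), ball_mem_nhds x (by positivity), ?_⟩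
    refine Subsingleton.finite fun j ⟨p, hpj, hpx⟩ k ⟨q, hqk, hqx⟩ => hunique x j k ?_ ?_
    · linarith [hφ j p hpj, mem_ball'.1 hpx, dist_triangle x p (y j)]
    · linarith [hφ k q hqk, mem_ball'.1 hqx, dist_triangle x q (y k)]
  refine ⟨fun x => ∑ᶠ k, φ k x, ?_, fun x => ?_, fun k => ?_⟩
  · rw [← contMDiff_iff_contDiff]
    exact contMDiff_finsum (fun k => contMDiff_iff_contDiff.2
      (contDiff_const.mul (b.contDiff.comp (contDiff_id.sub contDiff_const)))) hlf
  · dsimp only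
    by_cases h : ∃ k, dist x (y k) < δ / 2
    · obtain ⟨k, hk⟩ := h
      rw [hsum x k hk]
      exact ⟨mul_nonneg (hv k).1 b.nonneg, mul_le_one₀ (hv k).2 b.nonneg b.le_one⟩
    · push Not at h
      rw [finsum_eq_zero_of_forall_eq_zero fun k => not_not.1 fun hk => by
        linarith [hφ k x hk, h k]]
      exact ⟨le_rfl, zero_le_one⟩
  · dsimp only
    rw [hsum (y k) k (by simpa using hδ)]
    simp [φ, b.one_of_mem_closedBall (mem_closedBall_self b.rIn_pos.le)]

section

variable {N : ℕ} {A : Set (RN N)} {f : RN N → ℝ}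

theorem mul_comp_mem_smoothIntegrable (hf : f ∈ SmoothIntegrable N) {u : RN N → ℝ}
    (hu : ContDiff ℝ (⊤ : ℕ∞) u) {K : Set ℝ} (hK : IsCompact K)
    (huK : ∀ x, u x ∈ K) {g : ℝ → ℝ} (hg : ContDiff ℝ (⊤ : ℕ∞) g) :
    f * g ∘ u ∈ SmoothIntegrable N := by
  obtain ⟨M, hM⟩ := hK.exists_bound_of_continuousOn hg.continuous.continuousOn
  refine ⟨hf.1.mul (hg.comp hu), fun p hp => (hf.2 p hp).of_le_mul (c := M) ?_ ?_⟩
  · exact (hf.1.continuous.mul (hg.continuous.comp hu.continuous)).aestronglyMeasurable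
  · refine Eventually.of_forall fun x => ?_
    simpa [norm_mul, mul_comm] using mul_le_mul_of_nonneg_left (hM _ (huK x)) (norm_nonneg (f x))

theorem not_unboundedOn_zero : ¬ UnboundedOn A 0 := fun h => by
  obtain ⟨x, -, hx⟩ := h 0
  simp at hx

theorem UnboundedOn.exists_lt_abs_lt_norm (hf : Continuous f)
    (hfA : UnboundedOn A f) (R C : ℝ) : ∃ x ∈ A, C < |f x| ∧ R < ‖x‖ := by
  obtain ⟨M, hM⟩ :=
    (isCompact_closedBall (0 : RN N) R).exists_bound_of_continuousOn hf.continuousOn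
  obtain ⟨x, hxA, hx⟩ := hfA (max C M)
  refine ⟨x, hxA, (le_max_left _ _).trans_lt hx, ?_⟩
  by_contra! hxR
  have := hM x (mem_closedBall_zero_iff.2 hxR)
  rw [Real.norm_eq_abs] at this
  linarith [le_max_right C M]

theorem UnboundedOn.exists_separated_seq (hf : Continuous f) (hfA : UnboundedOn A f) (δ : ℝ) :
    ∃ y : ℕ → RN N, (∀ k, y k ∈ A) ∧ Pairwise (fun j k => δ ≤ dist (y j) (y k)) ∧
      Tendsto (fun k => |f (y k)|) atTop atTop := by
  obtain ⟨y, hyA, hy⟩ := exists_seq_of_forall_finset_exists (· ∈ A)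
    (fun x z => δ ≤ dist x z ∧ |f x| + 1 ≤ |f z|) fun s _ => by
      obtain ⟨z, hzA, hfz, hz⟩ :=
        hfA.exists_lt_abs_lt_norm hf (∑ x ∈ s, ‖x‖ + δ) (∑ x ∈ s, |f x| + 1)
      refine ⟨z, hzA, fun x hx => ⟨?_, ?_⟩⟩
      · have := s.single_le_sum (f := (‖·‖)) (fun _ _ => norm_nonneg _) hx
        linarith [norm_sub_norm_le z x, dist_comm x z, dist_eq_norm z x]
      · have := s.single_le_sum (f := fun x => |f x|) (fun _ _ => abs_nonneg _) hx
        linarith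
  refine ⟨y, hyA, fun j k hjk => ?_, ?_⟩
  · rcases hjk.lt_or_gt with h | h
    · exact (hy j k h).1
    · exact dist_comm (y j) (y k) ▸ (hy k j h).1
  · have hgrow : ∀ n : ℕ, (n : ℝ) ≤ |f (y n)| := by
      intro n
      induction n with
      | zero => simp
      | succ n ih => push_cast; linarith [(hy n (n + 1) n.lt_succ_self).2]
    exact tendsto_atTop_mono hgrow tendsto_natCast_atTop_atTop

theorem UnboundedOn.exists_contDiff_eqOn_zero_or_unboundedOn_mul_comp (hf : Continuous f)
    (hfA : UnboundedOn A f) :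
    ∃ u : RN N → ℝ, ContDiff ℝ (⊤ : ℕ∞) u ∧ (∀ x, u x ∈ Icc (0 : ℝ) 1) ∧
      ∀ g : ℝ → ℝ, Continuous g → EqOn g 0 (Icc 0 1) ∨ UnboundedOn A (f * g ∘ u) := by
  obtain ⟨y, hyA, hy, hfy⟩ := hfA.exists_separated_seq hf 1
  obtain ⟨d, hd⟩ := TopologicalSpace.exists_dense_seq (Icc (0 : ℝ) 1)
  obtain ⟨u, hu, hu01, huy⟩ :=
    exists_contDiff_interpolating_of_separated one_pos hy (v := fun k => d k.unpair.1)
      fun k => (d _).2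
  refine ⟨u, hu, hu01, fun g hg => ?_⟩
  by_cases hgd : ∀ m, g (d m) = 0
  · left
    have : g ∘ Subtype.val = (0 : Icc (0 : ℝ) 1 → ℝ) :=
      (hg.comp continuous_subtype_val).ext_on hd continuous_const
        (by rintro _ ⟨m, rfl⟩; exact hgd m)
    exact fun t ht => congrFun this ⟨t, ht⟩
  · right
    push Not at hgd
    obtain ⟨m, hm⟩ := hgd
    have huym : ∀ j, u (y (Nat.pair m j)) = d m := fun j => by simp [huy]
    have hpair : Tendsto (Nat.pair m) atTop atTop :=
      tendsto_atTop_mono (Nat.right_le_pair m) tendsto_id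
    have hgrow : Tendsto (fun j => |(f * g ∘ u) (y (Nat.pair m j))|) atTop atTop := by
      simpa [abs_mul, huym] using (hfy.comp hpair).atTop_mul_const (abs_pos.2 hm)
    intro C
    obtain ⟨j, hj⟩ := (hgrow.eventually_gt_atTop C).exists
    exact ⟨_, hyA _, hj⟩

end

theorem nBCI_pointwise_continuum_lineable_general (N : ℕ) (A : Set (RN N)) :
    ∀ f ∈ nBCI A, ∃ W : Submodule ℝ (RN N → ℝ),
      Module.rank ℝ W = Cardinal.continuum ∧ f ∈ W ∧
      (W : Set (RN N → ℝ)) ⊆ nBCI A ∪ {0} := by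
  rintro f ⟨hf, hfA⟩
  obtain ⟨u, hu, hu01, hdich⟩ :=
    hfA.exists_contDiff_eqOn_zero_or_unboundedOn_mul_comp hf.1.continuous
  let e : ℝ → ℝ → ℝ := fun c t => Real.exp (c * t)
  let Φ : (ℝ → ℝ) →ₗ[ℝ] RN N → ℝ := LinearMap.mulLeft ℝ f ∘ₗ LinearMap.funLeft ℝ ℝ u
  have hΦ : ∀ g ∈ Submodule.span ℝ (range e), g = 0 ∨ Φ g ∈ nBCI A := fun g hg => by
    have hga := analyticOnNhd_of_mem_span_exp_mul hg
    have hgs : ContDiff ℝ (⊤ : ℕ∞) g := hga.contDiff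
    refine (hdich g hgs.continuous).imp (hga.eq_zero_of_eqOn_Icc one_pos) fun h => ?_
    exact ⟨mul_comp_mem_smoothIntegrable hf hu isCompact_Icc hu01 hgs, h⟩
  have hker : Disjoint (Submodule.span ℝ (range e)) (LinearMap.ker Φ) :=
    Submodule.disjoint_def.2 fun g hg hΦg => (hΦ g hg).resolve_right fun h =>
      not_unboundedOn_zero (LinearMap.mem_ker.1 hΦg ▸ h.2)
  have hli := linearIndependent_exp_mul.map hker
  refine ⟨(Submodule.span ℝ (range e)).map Φ, ?_, ⟨e 0, Submodule.subset_span ⟨0, rfl⟩, ?_⟩, ?_⟩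
  · rw [Submodule.map_span, ← range_comp, rank_span hli, Cardinal.mk_range_eq _ hli.injective,
      Cardinal.mk_real]
  · ext x
    simp [Φ, e]
  · rintro _ ⟨g, hg, rfl⟩
    rcases hΦ g hg with rfl | h
    · exact Or.inr (map_zero Φ)
    · exact Or.inl h

/-- `nBC∞I(A)` is pointwise `𝔠`-lineable. -/
theorem nBCI_pointwise_continuum_lineable (N : ℕ) (hN : 1 ≤ N)
    (A : Set (RN N)) (hA : ¬ Bornology.IsBounded A) :
    ∀ f ∈ nBCI A, ∃ W : Submodule ℝ (RN N → ℝ),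
      Module.rank ℝ W = Cardinal.continuum ∧ f ∈ W ∧
      (W : Set (RN N → ℝ)) ⊆ nBCI A ∪ {0} :=
  nBCI_pointwise_continuum_lineable_general N A
end
end

section
/- Let N ≥ 1 and let A ⊆ ℝ^N be not relatively compact (equivalently, unbounded). Then for every f ∈ nBC∞I(A) there exists a linear subspace W of the space of functions ℝ^N → ℝ such that: (i) dim(W) = 𝔠; (ii) f ∈ W; (iii) W ⊆ nBC∞I(A) ∪ {0}; and (iv) whenever (H_l)_{l∈ℕ} is a sequence in W converging pointwise on ℝ^N to a function h with h ≠ 0, the function h is unbounded on A. (In particular W, being contained in X and closed under limits in any topology finer than pointwise convergence, witnesses the pointwise 𝔠-spaceability of nBC∞I(A) in the Fréchet space X.) -/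
open MeasureTheory Filter Topology

noncomputable section

/-!
Choose points `b (k, j) ∈ A`, pairwise at distance at least `1`, with `j < |f (b (k, j))|`, and
put a small bump around each of them. For `c : ℕ → ℝ`, `chainMultiplier b c` is smooth, equals
`c k` at the points `b (k, j)` of chain `k`, interpolates between `c 0` and `c k` on the bumps of
chain `k`, and equals `c 0` off the bumps. Take for `W` the functions `f * chainMultiplier b c`
that lie in `X`: it contains `f` (for `c = 1`) and the independent family `c = (t ^ k)_k`,
`0 < t < 1`. Such a function `g` determines `c k = g (b (k, 0)) / f (b (k, 0))`, so the range of
`c ↦ f * chainMultiplier b c` is closed under pointwise limits; and if `c k ≠ 0`, then `g` agrees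
with `c k • f` along chain `k`, on which `f` is unbounded.
-/

open Metric Set

section BumpSeries

variable {E : Type*} [NormedAddCommGroup E] [NormedSpace ℝ E] [HasContDiffBump E]

def smallBump (a : E) : ContDiffBump a := ⟨1 / 8, 1 / 4, by norm_num, by norm_num⟩

theorem smallBump_eq_zero {a x : E} (h : 1 / 4 ≤ dist x a) : smallBump a x = 0 :=
  (smallBump a).zero_of_le_dist h

theorem smallBump_self (a : E) : smallBump a a = 1 :=
  (smallBump a).one_of_mem_closedBall (mem_closedBall_self (by norm_num [smallBump]))

variable {ι : Type*} {b : ι → E}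

def bumpSeries (b : ι → E) (w : ι → ℝ) (x : E) : ℝ := ∑ᶠ i, smallBump (b i) x * w i

theorem exists_forall_ball_smallBump_eq_zero [Nonempty ι]
    (hb : Pairwise fun i j => 1 ≤ dist (b i) (b j)) (x : E) :
    ∃ i, ∀ y ∈ ball x (1 / 4), ∀ j ≠ i, smallBump (b j) y = 0 := by
  by_cases hnear : ∃ i, dist x (b i) < 1 / 2
  · obtain ⟨i, hi⟩ := hnear
    refine ⟨i, fun y hy j hj => smallBump_eq_zero ?_⟩
    rw [mem_ball] at hy
    linarith [hb hj, dist_triangle4 (b j) y x (b i), dist_comm y (b j)]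
  · simp only [not_exists, not_lt] at hnear
    refine ⟨Classical.arbitrary ι, fun y hy j _ => smallBump_eq_zero ?_⟩
    rw [mem_ball] at hy
    linarith [hnear j, dist_triangle x y (b j), dist_comm x y]

theorem exists_bumpSeries_eqOn [Nonempty ι] (hb : Pairwise fun i j => 1 ≤ dist (b i) (b j))
    (x : E) :
    ∃ i, ∀ w, EqOn (bumpSeries b w) (fun y => smallBump (b i) y * w i) (ball x (1 / 4)) := by
  obtain ⟨i, hi⟩ := exists_forall_ball_smallBump_eq_zero hb x
  exact ⟨i, fun w y hy => finsum_eq_single _ i fun j hj => by rw [hi y hy j hj, zero_mul]⟩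

theorem contDiff_bumpSeries [Nonempty ι] (hb : Pairwise fun i j => 1 ≤ dist (b i) (b j))
    (w : ι → ℝ) {n : ℕ∞} : ContDiff ℝ n (bumpSeries b w) := by
  refine contDiff_iff_contDiffAt.2 fun x => ?_
  obtain ⟨i, hi⟩ := exists_bumpSeries_eqOn hb x
  exact ((smallBump (b i)).contDiff.mul contDiff_const).contDiffAt.congr_of_eventuallyEq
    (Filter.eventuallyEq_of_mem (ball_mem_nhds x (by norm_num)) (hi w))

theorem bumpSeries_apply_self (hb : Pairwise fun i j => 1 ≤ dist (b i) (b j)) (w : ι → ℝ)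
    (i : ι) : bumpSeries b w (b i) = w i := by
  rw [bumpSeries, finsum_eq_single _ i, smallBump_self, one_mul]
  intro j hj
  rw [smallBump_eq_zero (by linarith [hb hj.symm]), zero_mul]

end BumpSeries

section ChainMultiplier

variable {E : Type*} [NormedAddCommGroup E] [NormedSpace ℝ E] [HasContDiffBump E]
  {b : ℕ × ℕ → E}

def chainMultiplier (b : ℕ × ℕ → E) (c : ℕ → ℝ) (x : E) : ℝ :=
  c 0 + bumpSeries b (fun p => c p.1 - c 0) x

theorem exists_chainMultiplier_apply (hb : Pairwise fun p q => 1 ≤ dist (b p) (b q)) (x : E) :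
    ∃ p : ℕ × ℕ, ∀ c, chainMultiplier b c x = c 0 + smallBump (b p) x * (c p.1 - c 0) := by
  obtain ⟨p, hp⟩ := exists_bumpSeries_eqOn hb x
  exact ⟨p, fun c => congrArg (c 0 + ·) (hp _ (mem_ball_self (by norm_num)))⟩

theorem contDiff_chainMultiplier (hb : Pairwise fun p q => 1 ≤ dist (b p) (b q)) (c : ℕ → ℝ)
    {n : ℕ∞} : ContDiff ℝ n (chainMultiplier b c) :=
  contDiff_const.add (contDiff_bumpSeries hb _)

theorem chainMultiplier_apply_self (hb : Pairwise fun p q => 1 ≤ dist (b p) (b q))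
    (c : ℕ → ℝ) (p : ℕ × ℕ) : chainMultiplier b c (b p) = c p.1 := by
  rw [chainMultiplier, bumpSeries_apply_self hb, add_sub_cancel]

theorem chainMultiplier_const (a : ℝ) : chainMultiplier b (fun _ => a) = fun _ => a := by
  ext x
  simp [chainMultiplier, bumpSeries]

theorem abs_chainMultiplier_le (hb : Pairwise fun p q => 1 ≤ dist (b p) (b q)) {c : ℕ → ℝ}
    {C : ℝ} (hc : ∀ k, |c k| ≤ C) (x : E) : |chainMultiplier b c x| ≤ C := by
  obtain ⟨p, hp⟩ := exists_chainMultiplier_apply hb x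
  have h0 : 0 ≤ smallBump (b p) x := (smallBump (b p)).nonneg
  have h1 : smallBump (b p) x ≤ 1 := (smallBump (b p)).le_one
  rw [hp, show c 0 + smallBump (b p) x * (c p.1 - c 0)
    = (1 - smallBump (b p) x) * c 0 + smallBump (b p) x * c p.1 by ring]
  calc _ ≤ (1 - smallBump (b p) x) * |c 0| + smallBump (b p) x * |c p.1| := by
        refine (abs_add_le _ _).trans_eq ?_
        rw [abs_mul, abs_mul, abs_of_nonneg h0, abs_of_nonneg (sub_nonneg.2 h1)]
    _ ≤ (1 - smallBump (b p) x) * C + smallBump (b p) x * C := by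
        gcongr <;> exact hc _
    _ = C := by ring

theorem continuous_chainMultiplier_apply (hb : Pairwise fun p q => 1 ≤ dist (b p) (b q))
    (x : E) : Continuous fun c : ℕ → ℝ => chainMultiplier b c x := by
  obtain ⟨p, hp⟩ := exists_chainMultiplier_apply hb x
  simp_rw [hp]
  fun_prop

variable (f : E → ℝ)

/-- `∑ᶠ` is `0` on infinitely supported families, so `bumpSeries b` is linear only for separated
`b`. -/
def multiplierMap (hb : Pairwise fun p q => 1 ≤ dist (b p) (b q)) :
    (ℕ → ℝ) →ₗ[ℝ] E → ℝ where
  toFun c := f * chainMultiplier b c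
  map_add' c c' := by
    ext x
    obtain ⟨p, hp⟩ := exists_chainMultiplier_apply hb x
    simp only [Pi.mul_apply, Pi.add_apply, hp]
    ring
  map_smul' a c := by
    ext x
    obtain ⟨p, hp⟩ := exists_chainMultiplier_apply hb x
    simp only [Pi.mul_apply, Pi.smul_apply, smul_eq_mul, hp, RingHom.id_apply]
    ring

def chainCoeffs (b : ℕ × ℕ → E) (g : E → ℝ) (k : ℕ) : ℝ := g (b (k, 0)) / f (b (k, 0))

variable {f} (hb : Pairwise fun p q => 1 ≤ dist (b p) (b q))
include hb

theorem multiplierMap_apply (c : ℕ → ℝ) : multiplierMap f hb c = f * chainMultiplier b c := rfl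

theorem multiplierMap_apply_self (c : ℕ → ℝ) (p : ℕ × ℕ) :
    multiplierMap f hb c (b p) = f (b p) * c p.1 := by
  rw [multiplierMap_apply, Pi.mul_apply, chainMultiplier_apply_self hb]

theorem self_mem_range_multiplierMap : f ∈ LinearMap.range (multiplierMap f hb) :=
  ⟨fun _ => 1, by rw [multiplierMap_apply, chainMultiplier_const, Pi.one_def.symm, mul_one]⟩

variable (hf : ∀ k, f (b (k, 0)) ≠ 0)
include hf

theorem chainCoeffs_multiplierMap (c : ℕ → ℝ) : chainCoeffs f b (multiplierMap f hb c) = c := by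
  ext k
  rw [chainCoeffs, multiplierMap_apply_self, mul_div_cancel_left₀ _ (hf k)]

theorem multiplierMap_injective : Function.Injective (multiplierMap f hb) :=
  Function.LeftInverse.injective (chainCoeffs_multiplierMap hb hf)

theorem isClosed_range_multiplierMap :
    IsClosed (LinearMap.range (multiplierMap f hb) : Set (E → ℝ)) := by
  have hrange : (LinearMap.range (multiplierMap f hb) : Set (E → ℝ))
      = {g | multiplierMap f hb (chainCoeffs f b g) = g} := by
    ext g
    constructor
    · rintro ⟨c, rfl⟩
      exact congrArg _ (chainCoeffs_multiplierMap hb hf c)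
    · intro hg
      exact ⟨_, hg⟩
  rw [hrange]
  refine isClosed_eq (continuous_pi fun x => ?_) continuous_id
  simp only [multiplierMap_apply, Pi.mul_apply]
  refine continuous_const.mul ((continuous_chainMultiplier_apply hb x).comp ?_)
  exact continuous_pi fun k => (continuous_apply _).div_const _

end ChainMultiplier

theorem linearIndependent_fun_pow (K : Type*) [CommRing K] [IsDomain K] :
    LinearIndependent K fun (t : K) (k : ℕ) => t ^ k := by
  -- the sequences `k ↦ t ^ k` are the characters of `(ℕ, +)`
  have hchar := (linearIndependent_monoidHom (Multiplicative ℕ) K).comp (powersHom K)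
    (powersHom K).injective
  have h := hchar.map' (LinearEquiv.funCongrLeft K K Multiplicative.ofAdd).toLinearMap
    (LinearEquiv.ker _)
  have heq : ⇑(LinearEquiv.funCongrLeft K K Multiplicative.ofAdd).toLinearMap ∘
      ((fun φ : Multiplicative ℕ →* K => ⇑φ) ∘ powersHom K) = fun (t : K) (k : ℕ) => t ^ k := by
    ext t k
    simp [LinearEquiv.funCongrLeft_apply, powersHom_apply]
  rw [heq] at h
  exact h

section SmoothIntegrable

variable {N : ℕ}

def smoothIntegrableSubmodule (N : ℕ) : Submodule ℝ (RN N → ℝ) where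
  carrier := SmoothIntegrable N
  add_mem' hf hg := ⟨hf.1.add hg.1, fun p hp => (hf.2 p hp).add (hg.2 p hp)⟩
  zero_mem' := ⟨contDiff_const, fun _ _ => MemLp.zero⟩
  smul_mem' a _ hf := ⟨hf.1.const_smul a, fun p hp => (hf.2 p hp).const_smul a⟩

theorem mul_mem_smoothIntegrable {f m : RN N → ℝ} (hf : f ∈ SmoothIntegrable N)
    (hm : ContDiff ℝ (⊤ : ℕ∞) m) {C : ℝ} (hC : ∀ x, |m x| ≤ C) : f * m ∈ SmoothIntegrable N := by
  refine ⟨hf.1.mul hm, fun p hp => (hf.2 p hp).of_le_mul (c := C)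
    (hf.1.continuous.mul hm.continuous).aestronglyMeasurable (Eventually.of_forall fun x => ?_)⟩
  rw [Pi.mul_apply, Real.norm_eq_abs, Real.norm_eq_abs, abs_mul, mul_comm]
  exact mul_le_mul_of_nonneg_right (hC x) (abs_nonneg _)

end SmoothIntegrable

theorem exists_seq_separated {E : Type*} [NormedAddCommGroup E] {A : Set E} {f : E → ℝ}
    (h : ∀ R C : ℝ, ∃ y ∈ A, R ≤ ‖y‖ ∧ C < |f y|) :
    ∃ u : ℕ → E, (∀ n, u n ∈ A) ∧ (∀ n : ℕ, (n : ℝ) < |f (u n)|) ∧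
      Pairwise fun m n => 1 ≤ dist (u m) (u n) := by
  choose y hyA hyR hyC using h
  let u : ℕ → E := fun n => Nat.rec (y 0 0) (fun n v => y (‖v‖ + 1) (n + 1)) n
  have hstep : ∀ n, ‖u n‖ + 1 ≤ ‖u (n + 1)‖ := fun n => hyR _ _
  have hnorm : ∀ m n, m < n → ‖u m‖ + 1 ≤ ‖u n‖ := by
    intro m n hmn
    induction hmn with
    | refl => exact hstep m
    | @step k _ ih => linarith [hstep k]
  refine ⟨u, fun n => ?_, fun n => ?_, fun m n hmn => ?_⟩
  · cases n <;> apply hyA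
  · cases n with
    | zero => exact_mod_cast hyC 0 0
    | succ n => push_cast; exact hyC _ _
  · rcases hmn.lt_or_gt with h | h
    · linarith [hnorm m n h, norm_sub_norm_le (u n) (u m), dist_eq_norm (u n) (u m),
        dist_comm (u m) (u n)]
    · linarith [hnorm n m h, norm_sub_norm_le (u m) (u n), dist_eq_norm (u m) (u n)]

theorem rank_le_continuum_of_le_range {V : Type} [AddCommGroup V] [Module ℝ V]
    (M : (ℕ → ℝ) →ₗ[ℝ] V) {W : Submodule ℝ V} (hW : W ≤ LinearMap.range M) :
    Module.rank ℝ W ≤ Cardinal.continuum :=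
  calc Module.rank ℝ W ≤ Module.rank ℝ (LinearMap.range M) := Submodule.rank_mono hW
    _ ≤ Module.rank ℝ (ℕ → ℝ) := rank_range_le M
    _ ≤ Cardinal.mk (ℕ → ℝ) := rank_le_card ℝ _
    _ = Cardinal.continuum := by
      rw [← Cardinal.power_def, Cardinal.mk_real, Cardinal.mk_nat, Cardinal.continuum_power_aleph0]

section RN

variable {N : ℕ} {A : Set (RN N)} {f : RN N → ℝ}

theorem UnboundedOn.exists_mem_le_norm (hA : UnboundedOn A f) (hf : Continuous f) (R C : ℝ) :
    ∃ y ∈ A, R ≤ ‖y‖ ∧ C < |f y| := by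
  obtain ⟨D, hD⟩ := (isCompact_closedBall (0 : RN N) R).exists_bound_of_continuousOn
    hf.continuousOn
  obtain ⟨y, hyA, hy⟩ := hA (max C D)
  refine ⟨y, hyA, ?_, (le_max_left C D).trans_lt hy⟩
  by_contra! hR
  have hyD := hD y (mem_closedBall_zero_iff.2 hR.le)
  rw [Real.norm_eq_abs] at hyD
  linarith [le_max_right C D]

theorem UnboundedOn.exists_chains (hA : UnboundedOn A f) (hf : Continuous f) :
    ∃ b : ℕ × ℕ → RN N, (Pairwise fun p q => 1 ≤ dist (b p) (b q)) ∧ (∀ p, b p ∈ A) ∧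
      ∀ p, (p.2 : ℝ) < |f (b p)| := by
  obtain ⟨u, huA, hu, hsep⟩ := exists_seq_separated (hA.exists_mem_le_norm hf)
  refine ⟨u ∘ Nat.pairEquiv, hsep.comp_of_injective Nat.pairEquiv.injective, fun p => huA _,
    fun p => lt_of_le_of_lt ?_ (hu _)⟩
  exact_mod_cast Nat.right_le_pair p.1 p.2

variable {b : ℕ × ℕ → RN N} (hb : Pairwise fun p q => 1 ≤ dist (b p) (b q))

theorem unboundedOn_of_mem_range_multiplierMap (hbA : ∀ p, b p ∈ A)
    (hfb : ∀ p, (p.2 : ℝ) < |f (b p)|) {h : RN N → ℝ}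
    (hh : h ∈ LinearMap.range (multiplierMap f hb)) (hne : h ≠ 0) : UnboundedOn A h := by
  obtain ⟨c, rfl⟩ := hh
  obtain ⟨k, hk⟩ : ∃ k, c k ≠ 0 := by
    by_contra! hc
    exact hne (by rw [show c = 0 from funext hc, map_zero])
  intro C
  obtain ⟨j, hj⟩ := exists_nat_gt (C / |c k|)
  refine ⟨b (k, j), hbA _, ?_⟩
  rw [multiplierMap_apply_self, abs_mul]
  calc C < j * |c k| := (div_lt_iff₀ (abs_pos.2 hk)).1 hj
    _ ≤ |f (b (k, j))| * |c k| := by gcongr; exact (hfb (k, j)).le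

theorem continuum_le_rank_multiplierMap (hfX : f ∈ SmoothIntegrable N)
    (hf : ∀ k, f (b (k, 0)) ≠ 0) :
    Cardinal.continuum ≤
      Module.rank ℝ ↥(smoothIntegrableSubmodule N ⊓ LinearMap.range (multiplierMap f hb)) := by
  set W := smoothIntegrableSubmodule N ⊓ LinearMap.range (multiplierMap f hb)
  let g : Ioo (0 : ℝ) 1 → RN N → ℝ := fun t => multiplierMap f hb fun k => (t : ℝ) ^ k
  have hg : ∀ t, g t ∈ W := fun t => by
    refine ⟨mul_mem_smoothIntegrable hfX (contDiff_chainMultiplier hb _)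
      (abs_chainMultiplier_le hb (C := 1) fun k => ?_), _, rfl⟩
    rw [abs_pow, abs_of_pos t.2.1]
    exact pow_le_one₀ t.2.1.le t.2.2.le
  have hli : LinearIndependent ℝ fun t => (⟨g t, hg t⟩ : W) :=
    LinearIndependent.of_comp W.subtype <|
      ((linearIndependent_fun_pow ℝ).comp _ Subtype.val_injective).map'
        (multiplierMap f hb) (LinearMap.ker_eq_bot.2 (multiplierMap_injective hb hf))
  simpa [Cardinal.mk_Ioo_real] using hli.cardinal_le_rank

end RN

theorem nBCI_pointwise_continuum_spaceable_general (N : ℕ) (A : Set (RN N)) :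
    ∀ f ∈ nBCI A, ∃ W : Submodule ℝ (RN N → ℝ),
      Module.rank ℝ W = Cardinal.continuum ∧ f ∈ W ∧
      (W : Set (RN N → ℝ)) ⊆ nBCI A ∪ {0} ∧
      ∀ H : ℕ → (RN N → ℝ), (∀ l : ℕ, H l ∈ W) →
        ∀ h : RN N → ℝ, (∀ x : RN N, Tendsto (fun l => H l x) atTop (𝓝 (h x))) →
          h ≠ 0 → UnboundedOn A h := by
  rintro f ⟨hfX, hfA⟩
  obtain ⟨b, hb, hbA, hfb⟩ := hfA.exists_chains hfX.1.continuous
  have hf0 : ∀ k, f (b (k, 0)) ≠ 0 := fun k => abs_pos.1 (by simpa using hfb (k, 0))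
  have hunb : ∀ h ∈ LinearMap.range (multiplierMap f hb), h ≠ 0 → UnboundedOn A h :=
    fun h => unboundedOn_of_mem_range_multiplierMap hb hbA hfb
  refine ⟨smoothIntegrableSubmodule N ⊓ LinearMap.range (multiplierMap f hb),
    le_antisymm (rank_le_continuum_of_le_range _ inf_le_right)
      (continuum_le_rank_multiplierMap hb hfX hf0),
    ⟨hfX, self_mem_range_multiplierMap hb⟩, fun g ⟨hgX, hg⟩ => ?_, fun H hH h hlim => ?_⟩
  · by_cases hg0 : g = 0
    · exact Or.inr hg0
    · exact Or.inl ⟨hgX, hunb g hg hg0⟩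
  · exact hunb h ((isClosed_range_multiplierMap hb hf0).mem_of_tendsto (tendsto_pi_nhds.2 hlim)
      (Eventually.of_forall fun l => (hH l).2))

/-- `nBC∞I(A)` is pointwise `𝔠`-spaceable: the witnessing subspace is
moreover closed under nonzero pointwise limits within `nBC∞I(A)`. -/
theorem nBCI_pointwise_continuum_spaceable (N : ℕ) (hN : 1 ≤ N)
    (A : Set (RN N)) (hA : ¬ Bornology.IsBounded A) :
    ∀ f ∈ nBCI A, ∃ W : Submodule ℝ (RN N → ℝ),
      Module.rank ℝ W = Cardinal.continuum ∧ f ∈ W ∧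
      (W : Set (RN N → ℝ)) ⊆ nBCI A ∪ {0} ∧
      ∀ H : ℕ → (RN N → ℝ), (∀ l : ℕ, H l ∈ W) →
        ∀ h : RN N → ℝ, (∀ x : RN N, Tendsto (fun l => H l x) atTop (𝓝 (h x))) →
          h ≠ 0 → UnboundedOn A h :=
  nBCI_pointwise_continuum_spaceable_general N A

end
end

section
/- Let N ≥ 1 and let A ⊆ ℝ^N be not relatively compact (equivalently, unbounded). Let nBC∞(A) := {f ∈ C^∞(ℝ^N) : f is unbounded on A}. Then for every f ∈ nBC∞(A) there exists a linear subspace V_f of C^∞(ℝ^N) such that: (i) dim(V_f) = 𝔠; (ii) every element of V_f is infinitely differentiable and belongs to L^p(ℝ^N) for every real p ∈ [1, ∞); (iii) f ∉ V_f and every nonzero element of span{f} + V_f is unbounded on A; and (iv) whenever a sequence (H_l)_{l∈ℕ} in span{f} + V_f converges pointwise on ℝ^N to a function h with h ≠ 0, then h is unbounded on A. In particular, nBC∞(A) is maximal pointwise spaceable in C^∞(ℝ^N). -/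
/-!
Pick points of `A`, pairwise at distance `≥ 3`, along which `|f| → ∞`; one half of them serve
as the nodes `c w` (`w ∈ {0,1}*`) of a binary tree, the other half as probes. A branch
`σ ∈ {0,1}^ℕ` gives `g_σ = ∑ₙ 8ⁿ β_{σ|n}`, a sum of disjoint smooth bumps of height `8ⁿ` and radius
`8^{-(n+1)²}` at the nodes along `σ`. The shrinking radii make `g_σ` smooth and `p`-integrable for
every `p`, and the values at the nodes make the `g_σ` linearly independent, so they span a space of
dimension `𝔠`.

All `g_σ` lie in the space `W` of functions that are a multiple of the node's bump near each node,
vanish away from the bumps, and whose node values satisfy `v (w0) + v (w1) = 8 v (w)`. These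
are pointwise closed conditions, so `W` is closed in the product topology, and hence so is
`span {f} ⊔ W`. A nonzero `v ∈ W` has a nonzero node value, and descending the tree through a child
where `|v|` at least quadruples shows that `v` is unbounded on the nodes. An element `t f + v`
with `t ≠ 0` agrees with `t f` at the probes, where `f` is unbounded.
-/

open MeasureTheory Filter Topology

noncomputable section

/-- `nBC∞(A) = {f ∈ C^∞(ℝ^N) : f is unbounded on A}`. -/
def nBC {N : ℕ} (A : Set (RN N)) : Set (RN N → ℝ) :=
  {f | ContDiff ℝ (⊤ : ℕ∞) f ∧ UnboundedOn A f}


open Metric Set Function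
open scoped ENNReal ContDiff

namespace BumpTree

/-- The radii shrink superexponentially, which is what keeps the weights `8 ^ n` in every `L^p`. -/
def radius (n : ℕ) : ℝ := (8 : ℝ) ^ (-((n : ℝ) + 1) ^ 2)

lemma radius_pos (n : ℕ) : 0 < radius n := Real.rpow_pos_of_pos (by norm_num) _

lemma radius_le_one (n : ℕ) : radius n ≤ 1 :=
  Real.rpow_le_one_of_one_le_of_nonpos (by norm_num) (neg_nonpos.2 (sq_nonneg _))

lemma summable_rpow_mul_radius_pow (q : ℝ) {d : ℕ} (hd : 1 ≤ d) :
    Summable fun n : ℕ => ((8 : ℝ) ^ n) ^ q * radius n ^ d := by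
  refine Summable.of_nonneg_of_le (fun n => by unfold radius; positivity) (fun n => ?_)
    ((summable_geometric_of_lt_one (r := (8 : ℝ)⁻¹) (by norm_num) (by norm_num)).mul_left
      ((8 : ℝ) ^ (q ^ 2)))
  have h8 : (0 : ℝ) < 8 := by norm_num
  calc ((8 : ℝ) ^ n) ^ q * radius n ^ d ≤ ((8 : ℝ) ^ n) ^ q * radius n := by
        gcongr
        exact pow_le_of_le_one (radius_pos n).le (radius_le_one n) (by omega)
    _ = 8 ^ ((n : ℝ) * q - ((n : ℝ) + 1) ^ 2) := by
        rw [← Real.rpow_natCast, ← Real.rpow_mul h8.le, radius, ← Real.rpow_add h8, sub_eq_add_neg]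
    _ ≤ 8 ^ (q ^ 2 - n) :=
        Real.rpow_le_rpow_of_exponent_le (by norm_num)
          (by nlinarith [sq_nonneg ((n : ℝ) - q)])
    _ = 8 ^ (q ^ 2) * 8⁻¹ ^ n := by
        rw [Real.rpow_sub h8, Real.rpow_natCast, inv_pow, div_eq_mul_inv]

def ChildSum (k : ℝ) (u : List Bool → ℝ) : Prop :=
  ∀ w, u (w ++ [false]) + u (w ++ [true]) = k * u w

lemma not_bddAbove_abs_of_childSum {k : ℝ} (hk : 2 < k) {u : List Bool → ℝ} (hu : ChildSum k u)
    {w₀ : List Bool} (hw₀ : u w₀ ≠ 0) : ¬ BddAbove (range fun w => |u w|) := by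
  have grow : ∀ j : ℕ, ∃ w, (k / 2) ^ j * |u w₀| ≤ |u w| := by
    intro j
    induction j with
    | zero => exact ⟨w₀, by simp⟩
    | succ j ih =>
      obtain ⟨w, hw⟩ := ih
      have hsum : k * |u w| ≤ |u (w ++ [false])| + |u (w ++ [true])| := by
        calc k * |u w| = |u (w ++ [false]) + u (w ++ [true])| := by
              rw [hu w, abs_mul, abs_of_pos (by linarith : 0 < k)]
          _ ≤ _ := abs_add_le _ _
      have hstep : (k / 2) ^ (j + 1) * |u w₀| ≤ k / 2 * |u w| := by
        rw [pow_succ, mul_right_comm, mul_comm _ (k / 2)]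
        exact mul_le_mul_of_nonneg_left hw (by positivity)
      by_cases hb : k / 2 * |u w| ≤ |u (w ++ [false])|
      · exact ⟨w ++ [false], hstep.trans hb⟩
      · exact ⟨w ++ [true], by linarith⟩
  rintro ⟨C, hC⟩
  obtain ⟨j, hj⟩ := pow_unbounded_of_one_lt (C / |u w₀|) (by linarith : 1 < k / 2)
  obtain ⟨w, hw⟩ := grow j
  have := hC ⟨w, rfl⟩
  rw [div_lt_iff₀ (abs_pos.2 hw₀)] at hj
  linarith

lemma eq_of_dist_add_dist_lt {X ι : Type*} [PseudoMetricSpace X] {c : ι → X}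
    (hc : Pairwise fun i j => 3 ≤ dist (c i) (c j)) {x : X} {i j : ι}
    (h : dist x (c i) + dist x (c j) < 3) : i = j := by
  by_contra hne
  linarith [hc hne, dist_triangle_left (c i) (c j) x]

lemma locallyFinite_ball {X ι : Type*} [PseudoMetricSpace X] {c : ι → X}
    (hc : Pairwise fun i j => 3 ≤ dist (c i) (c j)) : LocallyFinite fun i => ball (c i) 1 := by
  refine fun x => ⟨ball x (1 / 2), ball_mem_nhds x (by norm_num), ?_⟩
  refine Set.Subsingleton.finite fun i ⟨y, hyi, hyx⟩ j ⟨y', hyj, hyx'⟩ =>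
    eq_of_dist_add_dist_lt hc (x := x) ?_
  rw [mem_ball] at hyi hyx hyj hyx'
  linarith [dist_triangle x y (c i), dist_triangle x y' (c j), dist_comm x y, dist_comm x y']

section Bumps

variable {E : Type*} [NormedAddCommGroup E] [NormedSpace ℝ E] [HasContDiffBump E]
  (c : List Bool → E)

def treeBump (w : List Bool) : ContDiffBump (c w) where
  rIn := radius w.length / 2
  rOut := radius w.length
  rIn_pos := half_pos (radius_pos _)
  rIn_lt_rOut := half_lt_self (radius_pos _)

/-- For `3`-separated centres at most one term is nonzero at each point; otherwise the `∑ᶠ`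
may have infinite support and be junk. -/
def bumpSum (u : List Bool → ℝ) (x : E) : ℝ := ∑ᶠ w, u w * treeBump c w x

def treeSubmodule : Submodule ℝ (E → ℝ) where
  carrier := {v | (∀ w, ∀ x ∈ ball (c w) (radius w.length), v x = v (c w) * treeBump c w x) ∧
    (∀ x, (∀ w, x ∉ ball (c w) (radius w.length)) → v x = 0) ∧ ChildSum 8 (v ∘ c)}
  add_mem' {v v'} hv hv' := by
    refine ⟨fun w x hx => ?_, fun x hx => ?_, fun w => ?_⟩
    · simp only [Pi.add_apply, hv.1 w x hx, hv'.1 w x hx, add_mul]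
    · simp only [Pi.add_apply, hv.2.1 x hx, hv'.2.1 x hx, add_zero]
    · have h := hv.2.2 w
      have h' := hv'.2.2 w
      simp only [comp_apply, Pi.add_apply] at h h' ⊢
      linear_combination h + h'
  zero_mem' := ⟨fun _ _ _ => by simp, fun _ _ => rfl, fun _ => by simp⟩
  smul_mem' t v hv := by
    refine ⟨fun w x hx => ?_, fun x hx => ?_, fun w => ?_⟩
    · simp only [Pi.smul_apply, smul_eq_mul, hv.1 w x hx, mul_assoc]
    · simp only [Pi.smul_apply, smul_eq_mul, hv.2.1 x hx, mul_zero]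
    · have h := hv.2.2 w
      simp only [comp_apply, Pi.smul_apply, smul_eq_mul] at h ⊢
      linear_combination t * h

lemma isClosed_treeSubmodule : IsClosed (treeSubmodule c : Set (E → ℝ)) := by
  simp only [treeSubmodule, Submodule.coe_set_mk, AddSubmonoid.coe_set_mk,
    AddSubsemigroup.coe_set_mk, Set.ofPred_and, Set.ofPred_forall, ChildSum, comp_apply]
  refine .inter (isClosed_iInter fun _ => isClosed_biInter fun _ _ => ?_)
    (.inter (isClosed_iInter fun _ => isClosed_iInter fun _ => ?_)
      (isClosed_iInter fun _ => ?_)) <;>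
  exact isClosed_eq (by fun_prop) (by fun_prop)

variable {c}

lemma treeBump_eq_zero_of_notMem_ball {w : List Bool} {x : E}
    (hx : x ∉ ball (c w) (radius w.length)) : treeBump c w x = 0 :=
  (treeBump c w).zero_of_le_dist (not_lt.1 fun h => hx (mem_ball.2 h))

lemma bumpSum_apply_of_mem_ball (hc : Pairwise fun w w' => 3 ≤ dist (c w) (c w'))
    (u : List Bool → ℝ) {w : List Bool} {x : E} (hx : x ∈ ball (c w) (radius w.length)) :
    bumpSum c u x = u w * treeBump c w x := by
  refine finsum_eq_single _ w fun w' hw' => ?_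
  have hx' : x ∉ ball (c w') (radius w'.length) := by
    intro hx'
    have := radius_le_one w.length
    have := radius_le_one w'.length
    exact hw' (eq_of_dist_add_dist_lt hc (x := x)
      (by linarith [mem_ball.1 hx, mem_ball.1 hx'])).symm
  rw [treeBump_eq_zero_of_notMem_ball hx', mul_zero]

lemma bumpSum_apply_of_forall_notMem_ball (u : List Bool → ℝ) {x : E}
    (hx : ∀ w, x ∉ ball (c w) (radius w.length)) : bumpSum c u x = 0 := by
  simp [bumpSum, treeBump_eq_zero_of_notMem_ball (hx _)]

lemma bumpSum_apply_center (hc : Pairwise fun w w' => 3 ≤ dist (c w) (c w'))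
    (u : List Bool → ℝ) (w : List Bool) : bumpSum c u (c w) = u w := by
  rw [bumpSum_apply_of_mem_ball hc u (mem_ball_self (radius_pos _)),
    (treeBump c w).one_of_mem_closedBall (mem_closedBall_self (half_pos (radius_pos _)).le),
    mul_one]

lemma bumpSum_mem_treeSubmodule (hc : Pairwise fun w w' => 3 ≤ dist (c w) (c w'))
    {u : List Bool → ℝ} (hu : ChildSum 8 u) : bumpSum c u ∈ treeSubmodule c := by
  refine ⟨fun w x hx => ?_, fun x hx => bumpSum_apply_of_forall_notMem_ball u hx, fun w => ?_⟩
  · rw [bumpSum_apply_of_mem_ball hc u hx, bumpSum_apply_center hc]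
  · simpa only [comp_apply, bumpSum_apply_center hc] using hu w

lemma contDiff_bumpSum (hc : Pairwise fun w w' => 3 ≤ dist (c w) (c w'))
    (u : List Bool → ℝ) : ContDiff ℝ ∞ (bumpSum c u) := by
  rw [← contMDiff_iff_contDiff]
  refine contMDiff_finsum (fun w => contMDiff_iff_contDiff.2
    (contDiff_const.mul (treeBump c w).contDiff)) ((locallyFinite_ball hc).subset fun w => ?_)
  exact (support_mul_subset_right _ _).trans <| (treeBump c w).support_eq.trans_subset
    (ball_subset_ball (radius_le_one _))

lemma enorm_mul_treeBump_rpow_le {q : ℝ} (hq : 0 < q) (t : ℝ) (w : List Bool) (x : E) :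
    ‖t * treeBump c w x‖ₑ ^ q ≤ (ball (c w) (radius w.length)).indicator (fun _ => ‖t‖ₑ ^ q) x := by
  by_cases hx : x ∈ ball (c w) (radius w.length)
  · rw [indicator_of_mem hx]
    refine ENNReal.rpow_le_rpow ?_ hq.le
    rw [enorm_mul]
    refine mul_le_of_le_one_right' ?_
    rw [Real.enorm_eq_ofReal (treeBump c w).nonneg]
    exact ENNReal.ofReal_le_one.2 (treeBump c w).le_one
  · rw [indicator_of_notMem hx, treeBump_eq_zero_of_notMem_ball hx, mul_zero, enorm_zero,
      ENNReal.zero_rpow_of_pos hq]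

variable [MeasurableSpace E] [BorelSpace E] (μ : Measure E)

lemma lintegral_enorm_bumpSum_rpow_le (hc : Pairwise fun w w' => 3 ≤ dist (c w) (c w'))
    (u : List Bool → ℝ) {q : ℝ} (hq : 0 < q) :
    ∫⁻ x, ‖bumpSum c u x‖ₑ ^ q ∂μ ≤ ∑' w, ‖u w‖ₑ ^ q * μ (ball (c w) (radius w.length)) := by
  have hpt : ∀ x, ‖bumpSum c u x‖ₑ ^ q ≤
      ∑' w, (ball (c w) (radius w.length)).indicator (fun _ => ‖u w‖ₑ ^ q) x := by
    intro x
    by_cases hx : ∃ w, x ∈ ball (c w) (radius w.length)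
    · obtain ⟨w, hw⟩ := hx
      rw [bumpSum_apply_of_mem_ball hc u hw]
      exact (enorm_mul_treeBump_rpow_le hq _ w x).trans (ENNReal.le_tsum w)
    · rw [bumpSum_apply_of_forall_notMem_ball u (not_exists.1 hx), enorm_zero,
        ENNReal.zero_rpow_of_pos hq]
      exact zero_le
  calc ∫⁻ x, ‖bumpSum c u x‖ₑ ^ q ∂μ
      ≤ ∫⁻ x, ∑' w, (ball (c w) (radius w.length)).indicator (fun _ => ‖u w‖ₑ ^ q) x ∂μ :=
        lintegral_mono hpt
    _ = ∑' w, ‖u w‖ₑ ^ q * μ (ball (c w) (radius w.length)) := by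
        rw [lintegral_tsum fun w => (measurable_const.indicator measurableSet_ball).aemeasurable]
        simp_rw [lintegral_indicator_const measurableSet_ball]

end Bumps

def branchPrefix (σ : ℕ → Bool) (n : ℕ) : List Bool := List.ofFn fun i : Fin n => σ i

@[simp] lemma length_branchPrefix (σ : ℕ → Bool) (n : ℕ) : (branchPrefix σ n).length = n :=
  List.length_ofFn

lemma injective_branchPrefix (σ : ℕ → Bool) : Injective (branchPrefix σ) :=
  fun m n h => by simpa using congrArg List.length h

lemma branchPrefix_succ (σ : ℕ → Bool) (n : ℕ) :
    branchPrefix σ (n + 1) = branchPrefix σ n ++ [σ n] := by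
  rw [branchPrefix, List.ofFn_succ_last]
  rfl

lemma eventually_branchPrefix_ne {σ τ : ℕ → Bool} (h : σ ≠ τ) :
    ∀ᶠ n in atTop, branchPrefix σ n ≠ branchPrefix τ n := by
  obtain ⟨k, hk⟩ := Function.ne_iff.1 h
  filter_upwards [eventually_gt_atTop k] with n hn heq
  exact hk (congrFun (List.ofFn_inj.1 heq) ⟨k, hn⟩)

lemma exists_injOn_branchPrefix (s : Finset (ℕ → Bool)) :
    ∃ n, InjOn (branchPrefix · n) s := by
  have h : ∀ᶠ n in atTop, ∀ p ∈ s ×ˢ s, p.1 ≠ p.2 → branchPrefix p.1 n ≠ branchPrefix p.2 n :=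
    (Filter.eventually_all_finset _).2 fun _ _ =>
      Filter.eventually_imp_distrib_left.2 eventually_branchPrefix_ne
  obtain ⟨n, hn⟩ := h.exists
  exact ⟨n, fun σ hσ τ hτ heq =>
    by_contra fun hne => hn (σ, τ) (Finset.mk_mem_product hσ hτ) hne heq⟩

def branchWeight (σ : ℕ → Bool) (w : List Bool) : ℝ :=
  if branchPrefix σ w.length = w then 8 ^ w.length else 0

lemma childSum_branchWeight (σ : ℕ → Bool) : ChildSum 8 (branchWeight σ) := by
  intro w
  have hchild : ∀ b, branchPrefix σ (w.length + 1) = w ++ [b] ↔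
      branchPrefix σ w.length = w ∧ σ w.length = b := by
    intro b
    rw [branchPrefix_succ]
    refine ⟨fun h => ?_, fun ⟨h₁, h₂⟩ => by rw [h₁, h₂]⟩
    obtain ⟨h₁, h₂⟩ := List.append_inj h (by simp)
    exact ⟨h₁, List.singleton_inj.1 h₂⟩
  simp only [branchWeight, List.length_append, List.length_singleton, hchild]
  by_cases hw : branchPrefix σ w.length = w <;> cases σ w.length <;> simp [hw, pow_succ, mul_comm]

lemma linearIndependent_branchWeight : LinearIndependent ℝ branchWeight := by
  refine linearIndependent_iff'.2 fun s t hsum σ hσ => ?_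
  obtain ⟨n, hn⟩ := exists_injOn_branchPrefix s
  have heval := congrFun hsum (branchPrefix σ n)
  rw [Finset.sum_apply, Finset.sum_eq_single σ (fun τ hτ hτσ => ?_) (absurd hσ)] at heval
  · simpa [branchWeight] using heval
  · have hne : branchPrefix τ n ≠ branchPrefix σ n := fun h => hτσ (hn hτ hσ h)
    simp [branchWeight, hne]

section Measure

variable {E : Type*} [NormedAddCommGroup E] [NormedSpace ℝ E] [MeasurableSpace E] [BorelSpace E]
  [FiniteDimensional ℝ E] [Nontrivial E] (μ : Measure E) [μ.IsAddHaarMeasure] {c : List Bool → E}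

lemma tsum_enorm_branchWeight_rpow_mul_lt_top (σ : ℕ → Bool) {q : ℝ} (hq : 0 < q) :
    ∑' w, ‖branchWeight σ w‖ₑ ^ q * μ (ball (c w) (radius w.length)) < ⊤ := by
  have hsupp : (support fun w => ‖branchWeight σ w‖ₑ ^ q * μ (ball (c w) (radius w.length))) ⊆
      range (branchPrefix σ) := by
    intro w hw
    by_contra hnot
    have : branchPrefix σ w.length ≠ w := fun h => hnot ⟨_, h⟩
    simp [branchWeight, this, ENNReal.zero_rpow_of_pos hq] at hw
  have hterm : ∀ n, ‖branchWeight σ (branchPrefix σ n)‖ₑ ^ q *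
      μ (ball (c (branchPrefix σ n)) (radius (branchPrefix σ n).length)) =
      ENNReal.ofReal (((8 : ℝ) ^ n) ^ q * radius n ^ Module.finrank ℝ E) * μ (ball 0 1) := by
    intro n
    simp only [branchWeight, length_branchPrefix, if_true]
    rw [Measure.addHaar_ball_of_pos μ _ (radius_pos n), Real.enorm_eq_ofReal (by positivity),
      ENNReal.ofReal_rpow_of_nonneg (by positivity) hq.le, ← mul_assoc,
      ← ENNReal.ofReal_mul (by positivity)]
  rw [← (injective_branchPrefix σ).tsum_eq hsupp, tsum_congr hterm, ENNReal.tsum_mul_right,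
    ← ENNReal.ofReal_tsum_of_nonneg (fun n => by have := radius_pos n; positivity)
      (summable_rpow_mul_radius_pow q Module.finrank_pos)]
  exact ENNReal.mul_lt_top ENNReal.ofReal_lt_top measure_ball_lt_top

end Measure

section BranchFunctions

variable {E : Type*} [NormedAddCommGroup E] [NormedSpace ℝ E] [HasContDiffBump E]
  {c : List Bool → E}

variable (c) in
def branchFunction (σ : ℕ → Bool) : E → ℝ := bumpSum c (branchWeight σ)

lemma linearIndependent_branchFunction (hc : Pairwise fun w w' => 3 ≤ dist (c w) (c w')) :
    LinearIndependent ℝ (branchFunction c) := by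
  refine LinearIndependent.of_comp (LinearMap.funLeft ℝ ℝ c) ?_
  convert linearIndependent_branchWeight
  ext σ w
  exact bumpSum_apply_center hc _ w

lemma rank_span_branchFunction (hc : Pairwise fun w w' => 3 ≤ dist (c w) (c w')) :
    Module.rank ℝ (Submodule.span ℝ (range (branchFunction c))) = Cardinal.continuum := by
  rw [rank_span (linearIndependent_branchFunction hc)]
  apply Cardinal.lift_injective.{0}
  rw [Cardinal.mk_range_eq_of_injective (linearIndependent_branchFunction hc).injective]
  simp

lemma span_branchFunction_le_treeSubmodule (hc : Pairwise fun w w' => 3 ≤ dist (c w) (c w')) :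
    Submodule.span ℝ (range (branchFunction c)) ≤ treeSubmodule c :=
  Submodule.span_le.2 <| range_subset_iff.2 fun σ =>
    bumpSum_mem_treeSubmodule hc (childSum_branchWeight σ)

variable [MeasurableSpace E] [BorelSpace E] (μ : Measure E) [FiniteDimensional ℝ E] [Nontrivial E]
  [μ.IsAddHaarMeasure]

lemma memLp_branchFunction (hc : Pairwise fun w w' => 3 ≤ dist (c w) (c w')) (σ : ℕ → Bool)
    {p : ℝ≥0∞} (hp₀ : p ≠ 0) (hp : p ≠ ⊤) : MemLp (branchFunction c σ) p μ := by
  have hq := ENNReal.toReal_pos hp₀ hp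
  refine ⟨(contDiff_bumpSum hc _).continuous.aestronglyMeasurable,
    (eLpNorm_lt_top_iff_lintegral_rpow_enorm_lt_top hp₀ hp).2 ?_⟩
  exact (lintegral_enorm_bumpSum_rpow_le μ hc _ hq).trans_lt
    (tsum_enorm_branchWeight_rpow_mul_lt_top μ σ hq)

end BranchFunctions

lemma exists_seq_separated_of_not_bddAbove {X : Type*} [PseudoMetricSpace X] [ProperSpace X]
    {f : X → ℝ} (hf : Continuous f) {A : Set X} (hA : ¬ BddAbove ((fun x => |f x|) '' A)) :
    ∃ b : ℕ → X, (∀ n, b n ∈ A) ∧ Pairwise (fun m n => 3 ≤ dist (b m) (b n)) ∧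
      ∀ n : ℕ, (n : ℝ) ≤ |f (b n)| := by
  obtain ⟨b, hbA, hb⟩ := exists_seq_of_forall_finset_exists (· ∈ A)
    (fun x y => 3 ≤ dist x y ∧ |f x| + 1 ≤ |f y|) fun s _ => by
      obtain ⟨M, hM⟩ := (s.isCompact_biUnion fun x _ => isCompact_closedBall x 3)
        |>.exists_bound_of_continuousOn hf.continuousOn
      obtain ⟨C, hC⟩ := (s.finite_toSet.image fun x => |f x|).bddAbove
      obtain ⟨_, ⟨y, hyA, rfl⟩, hy⟩ := not_bddAbove_iff.1 hA (max M (C + 1))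
      refine ⟨y, hyA, fun x hx => ⟨?_, ?_⟩⟩
      · by_contra hxy
        have := hM y (mem_biUnion hx (mem_closedBall.2 (by rw [dist_comm]; linarith)))
        rw [Real.norm_eq_abs] at this
        linarith [le_max_left M (C + 1)]
      · linarith [hC ⟨x, hx, rfl⟩, le_max_right M (C + 1)]
  refine ⟨b, hbA, fun m n hmn => ?_, fun n => ?_⟩
  · rcases hmn.lt_or_gt with h | h
    · exact (hb m n h).1
    · exact dist_comm (b m) (b n) ▸ (hb n m h).1
  · induction n with
    | zero => simp
    | succ n ih =>
      push_cast
      linarith [(hb n (n + 1) (lt_add_one n)).2]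

/-- The nodes of the tree are `a (.inl w)`, the probes `a (.inr j)`. -/
lemma exists_separated_nodes_and_probes {X : Type*} [PseudoMetricSpace X] [ProperSpace X]
    {f : X → ℝ} (hf : Continuous f) {A : Set X} (hA : ¬ BddAbove ((fun x => |f x|) '' A)) :
    ∃ a : List Bool ⊕ ℕ → X, range a ⊆ A ∧ Pairwise (fun i j => 3 ≤ dist (a i) (a j)) ∧
      ¬ BddAbove (range fun j => |f (a (.inr j))|) := by
  obtain ⟨b, hbA, hb, hfb⟩ := exists_seq_separated_of_not_bddAbove hf hA
  refine ⟨b ∘ Encodable.encode, range_subset_iff.2 fun i => hbA _,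
    fun i j hij => hb (Encodable.encode_injective.ne hij), not_bddAbove_iff.2 fun C => ?_⟩
  obtain ⟨j, hj⟩ := exists_nat_gt C
  refine ⟨_, ⟨j, rfl⟩, hj.trans_le (le_trans ?_ (hfb _))⟩
  simp only [Encodable.encode_inr, Encodable.encode_nat]
  push_cast
  linarith

section Frame

variable {E : Type*} [NormedAddCommGroup E] [NormedSpace ℝ E] [HasContDiffBump E]

lemma exists_apply_center_ne_zero {c : List Bool → E} {v : E → ℝ} (hv : v ∈ treeSubmodule c)
    (hv₀ : v ≠ 0) : ∃ w, v (c w) ≠ 0 := by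
  obtain ⟨x, hx⟩ := Function.ne_iff.1 hv₀
  by_cases hball : ∃ w, x ∈ ball (c w) (radius w.length)
  · obtain ⟨w, hw⟩ := hball
    exact ⟨w, left_ne_zero_of_mul (hv.1 w x hw ▸ hx)⟩
  · exact absurd (hv.2.1 x (not_exists.1 hball)) hx

variable {a : List Bool ⊕ ℕ → E}

lemma apply_inr_eq_zero_of_mem_treeSubmodule (ha : Pairwise fun i j => 3 ≤ dist (a i) (a j))
    {v : E → ℝ} (hv : v ∈ treeSubmodule (a ∘ .inl)) (j : ℕ) : v (a (.inr j)) = 0 :=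
  hv.2.1 _ fun w hw => by
    have hsep : 3 ≤ dist (a (.inr j)) ((a ∘ .inl) w) := ha Sum.inr_ne_inl
    linarith [mem_ball.1 hw, radius_le_one w.length]

lemma notMem_treeSubmodule (ha : Pairwise fun i j => 3 ≤ dist (a i) (a j)) {f : E → ℝ}
    (hf : ¬ BddAbove (range fun j => |f (a (.inr j))|)) : f ∉ treeSubmodule (a ∘ .inl) :=
  fun hfW => hf ⟨0, by rintro _ ⟨j, rfl⟩; simp [apply_inr_eq_zero_of_mem_treeSubmodule ha hfW j]⟩

lemma not_bddAbove_of_mem_span_sup_treeSubmodule {A : Set E} (haA : range a ⊆ A)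
    (ha : Pairwise fun i j => 3 ≤ dist (a i) (a j)) {f : E → ℝ}
    (hf : ¬ BddAbove (range fun j => |f (a (.inr j))|)) {g : E → ℝ}
    (hg : g ∈ Submodule.span ℝ {f} ⊔ treeSubmodule (a ∘ .inl)) (hg₀ : g ≠ 0) :
    ¬ BddAbove ((fun x => |g x|) '' A) := by
  obtain ⟨_, hfs, v, hv, rfl⟩ := Submodule.mem_sup.1 hg
  obtain ⟨t, rfl⟩ := Submodule.mem_span_singleton.1 hfs
  refine fun hbdd => ?_
  rcases eq_or_ne t 0 with rfl | ht
  · rw [zero_smul, zero_add] at hg₀ hbdd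
    obtain ⟨w, hw⟩ := exists_apply_center_ne_zero hv hg₀
    refine not_bddAbove_abs_of_childSum (by norm_num) hv.2.2 hw (hbdd.mono ?_)
    rintro _ ⟨w, rfl⟩
    exact ⟨_, haA ⟨.inl w, rfl⟩, rfl⟩
  · obtain ⟨C, hC⟩ := hbdd
    refine hf ⟨C / |t|, ?_⟩
    rintro _ ⟨j, rfl⟩
    have := hC ⟨_, haA ⟨.inr j, rfl⟩, rfl⟩
    simp only [Pi.add_apply, Pi.smul_apply, smul_eq_mul,
      apply_inr_eq_zero_of_mem_treeSubmodule ha hv j, add_zero, abs_mul] at this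
    rwa [le_div_iff₀ (abs_pos.2 ht), mul_comm]

end Frame

end BumpTree

open BumpTree

lemma unboundedOn_iff_not_bddAbove {N : ℕ} {A : Set (RN N)} {f : RN N → ℝ} :
    UnboundedOn A f ↔ ¬ BddAbove ((fun x => |f x|) '' A) := by
  simp [UnboundedOn, not_bddAbove_iff]

lemma span_subset_smoothIntegrable {N : ℕ} {S : Set (RN N → ℝ)} (hS : S ⊆ SmoothIntegrable N) :
    (Submodule.span ℝ S : Set (RN N → ℝ)) ⊆ SmoothIntegrable N := by
  intro v hv
  induction hv using Submodule.span_induction with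
  | mem v hv => exact hS hv
  | zero => exact ⟨contDiff_const, fun _ _ => MemLp.zero⟩
  | add v v' _ _ hv hv' => exact ⟨hv.1.add hv'.1, fun p hp => (hv.2 p hp).add (hv'.2 p hp)⟩
  | smul t v _ hv => exact ⟨hv.1.const_smul t, fun p hp => (hv.2 p hp).const_smul t⟩

theorem nBC_maximal_pointwise_spaceable_general (N : ℕ) (hN : 1 ≤ N)
    (A : Set (RN N)) :
    ∀ f ∈ nBC A, ∃ V : Submodule ℝ (RN N → ℝ),
      Module.rank ℝ V = Cardinal.continuum ∧
      (V : Set (RN N → ℝ)) ⊆ SmoothIntegrable N ∧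
      f ∉ V ∧
      (∀ g ∈ Submodule.span ℝ {f} ⊔ V, g ≠ 0 → UnboundedOn A g) ∧
      (∀ H : ℕ → (RN N → ℝ), (∀ l : ℕ, H l ∈ Submodule.span ℝ {f} ⊔ V) →
        ∀ h : RN N → ℝ, (∀ x : RN N, Tendsto (fun l => H l x) atTop (𝓝 (h x))) →
          h ≠ 0 → UnboundedOn A h) := by
  rintro f ⟨hf_smooth, hf_unbdd⟩
  have : Nontrivial (RN N) := by
    have : Nonempty (Fin N) := ⟨⟨0, hN⟩⟩
    infer_instance
  obtain ⟨a, haA, ha, hfa⟩ :=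
    exists_separated_nodes_and_probes hf_smooth.continuous (unboundedOn_iff_not_bddAbove.1 hf_unbdd)
  have hc : Pairwise fun w w' => 3 ≤ dist (a (.inl w)) (a (.inl w')) :=
    fun _ _ h => ha (Sum.inl_injective.ne h)
  set W := treeSubmodule (a ∘ .inl)
  have hVW := span_branchFunction_le_treeSubmodule hc
  have hunbdd : ∀ g ∈ Submodule.span ℝ {f} ⊔ W, g ≠ 0 → UnboundedOn A g := fun g hg hg₀ =>
    unboundedOn_iff_not_bddAbove.2 (not_bddAbove_of_mem_span_sup_treeSubmodule haA ha hfa hg hg₀)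
  have hclosed : IsClosed (↑(Submodule.span ℝ {f} ⊔ W) : Set (RN N → ℝ)) := by
    rw [sup_comm]
    exact W.isClosed_sup_finiteDimensional _ (isClosed_treeSubmodule _)
  refine ⟨_, rank_span_branchFunction hc, span_subset_smoothIntegrable ?_,
    fun hfV => notMem_treeSubmodule ha hfa (hVW hfV),
    fun g hg => hunbdd g (sup_le_sup_left hVW _ hg), fun H hH h hlim => hunbdd h ?_⟩
  · rintro _ ⟨σ, rfl⟩
    exact ⟨contDiff_bumpSum hc _, fun p hp => memLp_branchFunction volume hc σ
      (ENNReal.ofReal_pos.2 (by linarith)).ne' ENNReal.ofReal_ne_top⟩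
  · exact hclosed.mem_of_tendsto (tendsto_pi_nhds.2 hlim)
      (.of_forall fun l => sup_le_sup_left hVW _ (hH l))

/-- `nBC∞(A)` is maximal pointwise spaceable in `C^∞(ℝ^N)`: for every
`f ∈ nBC∞(A)` there is a `𝔠`-dimensional subspace `V_f` of smooth, everywhere
`p`-integrable functions with `f ∉ V_f`, every nonzero element of `span{f} + V_f`
unbounded on `A`, and every nonzero pointwise limit of a sequence in `span{f} + V_f`
unbounded on `A`. -/
theorem nBC_maximal_pointwise_spaceable (N : ℕ) (hN : 1 ≤ N)
    (A : Set (RN N)) (hA : ¬ Bornology.IsBounded A) :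
    ∀ f ∈ nBC A, ∃ V : Submodule ℝ (RN N → ℝ),
      Module.rank ℝ V = Cardinal.continuum ∧
      (V : Set (RN N → ℝ)) ⊆ SmoothIntegrable N ∧
      f ∉ V ∧
      (∀ g ∈ Submodule.span ℝ {f} ⊔ V, g ≠ 0 → UnboundedOn A g) ∧
      (∀ H : ℕ → (RN N → ℝ), (∀ l : ℕ, H l ∈ Submodule.span ℝ {f} ⊔ V) →
        ∀ h : RN N → ℝ, (∀ x : RN N, Tendsto (fun l => H l x) atTop (𝓝 (h x))) →
          h ≠ 0 → UnboundedOn A h) :=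
  nBC_maximal_pointwise_spaceable_general N hN A
end
end
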